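/- arXiv:math/0105171 — 3 statements merged into one kernel-verified Lean document; each statement's English description precedes it below -/
import Mathlib

section
/- Let N ≥ 1 and 1 ≤ k ≤ N. Suppose B : ℝ → M_N(ℝ) is a matrix-valued function which is differentiable at t₀ with derivative Ḃ = B'(t₀). Then the function t ↦ σ_k(B(t)) is differentiable at t₀, and its derivative there equals tr(T_{k−1}(B(t₀)) · Ḃ), the trace of the product of the (k−1)-st Newton transform of B(t₀) with Ḃ. -/
attribute [local instance] Matrix.normedAddCommGroup Matrix.normedSpace

/-- `msigma N k B` is the k-th elementary symmetric function of the eigenvalues of `B`,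
i.e. `(-1)^k` times the coefficient of `X^(N-k)` in the characteristic polynomial. -/
noncomputable def msigma (N k : ℕ) (B : Matrix (Fin N) (Fin N) ℝ) : ℝ :=
  (-1) ^ k * (Matrix.charpoly B).coeff (N - k)

/-- The q-th Newton transform `T_q(B) = ∑_{i=0}^q (-1)^i σ_{q-i}(B) B^i`. -/
noncomputable def newtonTransform (N q : ℕ) (B : Matrix (Fin N) (Fin N) ℝ) :
    Matrix (Fin N) (Fin N) ℝ :=
  ∑ i ∈ Finset.range (q + 1), ((-1 : ℝ) ^ i * msigma N (q - i) B) • B ^ i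


open Matrix Polynomial


lemma det_bound' {N : ℕ} (m : Fin N → Fin N → ℝ) :
    ‖Matrix.detRowAlternating (R := ℝ) (n := Fin N) m‖ ≤
      (Nat.factorial N : ℝ) * ∏ i : Fin N, ‖m i‖ := by
  have h : Matrix.detRowAlternating (R := ℝ) (n := Fin N) m = Matrix.det (Matrix.of m) := rfl
  rw [h, Matrix.det_apply']
  refine le_trans (norm_sum_le _ _) ?_
  have hstep : ∀ σ : Equiv.Perm (Fin N),
      ‖(Equiv.Perm.sign σ : ℝ) * ∏ i, Matrix.of m (σ i) i‖ ≤ ∏ i : Fin N, ‖m i‖ := by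
    intro σ
    rw [norm_mul]
    have hs : ‖(Equiv.Perm.sign σ : ℝ)‖ = 1 := by
      rcases Int.units_eq_one_or (Equiv.Perm.sign σ) with h1 | h1 <;> simp [h1]
    rw [hs, one_mul]
    have hre : (∏ i, Matrix.of m (σ i) i) = ∏ i, m i (σ⁻¹ i) := by
      rw [← Equiv.prod_comp σ (fun r => m r (σ⁻¹ r))]
      simp
    rw [hre]
    calc ‖∏ i, m i (σ⁻¹ i)‖ ≤ ∏ i, ‖m i (σ⁻¹ i)‖ := by
          rw [Real.norm_eq_abs, Finset.abs_prod]
          exact le_of_eq (Finset.prod_congr rfl fun i _ => (Real.norm_eq_abs _).symm)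
      _ ≤ ∏ i, ‖m i‖ := by
          refine Finset.prod_le_prod (fun i _ => norm_nonneg _) fun i _ => ?_
          exact norm_le_pi_norm (m i) (σ⁻¹ i)
  calc ∑ σ : Equiv.Perm (Fin N), ‖(Equiv.Perm.sign σ : ℝ) * ∏ i, Matrix.of m (σ i) i‖
      ≤ ∑ _σ : Equiv.Perm (Fin N), ∏ i : Fin N, ‖m i‖ := Finset.sum_le_sum fun σ _ => hstep σ
    _ = (Nat.factorial N : ℝ) * ∏ i : Fin N, ‖m i‖ := by
        rw [Finset.sum_const, nsmul_eq_mul]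
        congr 2
        rw [Finset.card_univ, Fintype.card_perm, Fintype.card_fin]

noncomputable def detCMM (N : ℕ) :
    ContinuousMultilinearMap ℝ (fun _ : Fin N => (Fin N → ℝ)) ℝ :=
  (Matrix.detRowAlternating : (Fin N → ℝ) [⋀^Fin N]→ₗ[ℝ] ℝ).toMultilinearMap.mkContinuous
    (Nat.factorial N : ℝ) det_bound'

lemma detCMM_apply {N : ℕ} (m : Matrix (Fin N) (Fin N) ℝ) : detCMM N m = m.det := rfl

lemma sum_det_updateRow_eq_trace {N : ℕ} (M V : Matrix (Fin N) (Fin N) ℝ) :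
    ∑ i : Fin N, (M.updateRow i (V i)).det = Matrix.trace (Matrix.adjugate M * V) := by
  have key : ∀ i : Fin N, (M.updateRow i (V i)).det
      = ∑ j : Fin N, V i j * Matrix.adjugate M j i := by
    intro i
    rw [← Matrix.cramer_transpose_apply]
    have hb : (V i) = ∑ j : Fin N, V i j • (Pi.single j 1 : Fin N → ℝ) := by
      ext j; simp [Pi.single_apply]
    conv_lhs => rw [hb]
    rw [map_sum, Finset.sum_apply]
    refine Finset.sum_congr rfl fun j _ => ?_
    rw [LinearMap.map_smul, Pi.smul_apply, smul_eq_mul,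
      Matrix.cramer_transpose_apply, Matrix.adjugate_apply]
  simp only [key, Matrix.trace, Matrix.diag, Matrix.mul_apply]
  rw [Finset.sum_comm]
  refine Finset.sum_congr rfl fun j _ => Finset.sum_congr rfl fun i _ => mul_comm _ _

/-- Jacobi's formula. -/
lemma jacobi {N : ℕ} {A : ℝ → Matrix (Fin N) (Fin N) ℝ} {A' : Matrix (Fin N) (Fin N) ℝ}
    {t₀ : ℝ} (h : HasDerivAt A A' t₀) :
    HasDerivAt (fun t => (A t).det) (Matrix.trace (Matrix.adjugate (A t₀) * A')) t₀ := by
  have hF := (detCMM N).hasFDerivAt (x := A t₀)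
  have hc : HasDerivAt (fun t => detCMM N (A t)) ((detCMM N).linearDeriv (A t₀) A') t₀ :=
    hF.comp_hasDerivAt t₀ h
  have heq : (detCMM N).linearDeriv (A t₀) A' = Matrix.trace (Matrix.adjugate (A t₀) * A') := by
    erw [ContinuousMultilinearMap.linearDeriv_apply]
    rw [← sum_det_updateRow_eq_trace]
    rfl
  rwa [heq] at hc

/-- `qmat N M j = ∑_{i=j+1}^{N} c_i M^(i-1-j)` where `c_i` are charpoly coefficients. -/
noncomputable def qmat (N : ℕ) (M : Matrix (Fin N) (Fin N) ℝ) (j : ℕ) :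
    Matrix (Fin N) (Fin N) ℝ :=
  ∑ i ∈ Finset.range (N - j), (Matrix.charpoly M).coeff (j + 1 + i) • M ^ i

lemma qmat_eq_zero (M : Matrix (Fin N) (Fin N) ℝ) {j : ℕ} (h : N ≤ j) : qmat N M j = 0 := by
  rw [qmat, Nat.sub_eq_zero_of_le h]
  simp

lemma qmat_rec (M : Matrix (Fin N) (Fin N) ℝ) (m : ℕ) (hm : 1 ≤ m) :
    qmat N M (m - 1) - M * qmat N M m = (Matrix.charpoly M).coeff m • 1 := by
  rcases le_or_gt m N with hmN | hmN
  · have h1 : N - (m - 1) = (N - m) + 1 := by omega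
    have hL : qmat N M (m - 1) = (∑ i ∈ Finset.range (N - m),
        (Matrix.charpoly M).coeff (m + (i + 1)) • M ^ (i + 1))
          + (Matrix.charpoly M).coeff m • 1 := by
      rw [qmat, h1, Finset.sum_range_succ']
      congr 1
      · refine Finset.sum_congr rfl fun i _ => ?_
        congr 2
        omega
      · rw [pow_zero]
        congr 2
        omega
    have hR : M * qmat N M m = ∑ i ∈ Finset.range (N - m),
        (Matrix.charpoly M).coeff (m + (i + 1)) • M ^ (i + 1) := by
      rw [qmat, Finset.mul_sum]
      refine Finset.sum_congr rfl fun i _ => ?_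
      rw [Matrix.mul_smul, pow_succ']
      congr 2
      omega
    rw [hL, hR, add_sub_cancel_left]
  · have hc : (Matrix.charpoly M).coeff m = 0 := by
      refine Polynomial.coeff_eq_zero_of_natDegree_lt ?_
      rcases Nat.eq_zero_or_pos N with h0 | h0
      · subst h0
        have : (Matrix.charpoly M) = 1 := by
          have := Matrix.charpoly_monic M
          rw [Matrix.charpoly]
          exact Matrix.det_eq_one_of_card_eq_zero (by simp)
        rw [this]
        simpa using hmN
      · have : Nontrivial ℝ := inferInstance
        rw [Matrix.charpoly_natDegree_eq_dim]
        simpa using hmN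
    rw [qmat_eq_zero M (by omega : N ≤ m - 1), qmat_eq_zero M (le_of_lt hmN), hc]
    simp

lemma M_mul_qmat_zero (M : Matrix (Fin N) (Fin N) ℝ) :
    M * qmat N M 0 = -((Matrix.charpoly M).coeff 0 • 1) := by
  have hCH := Matrix.aeval_self_charpoly M
  have hd : (Matrix.charpoly M).natDegree < N + 1 := by
    rcases Nat.eq_zero_or_pos N with h0 | h0
    · subst h0
      have : (Matrix.charpoly M) = 1 :=
        Matrix.det_eq_one_of_card_eq_zero (by simp)
      simp [this]
    · rw [Matrix.charpoly_natDegree_eq_dim]; simp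
  have hsum := (Matrix.charpoly M).as_sum_range' (N + 1) hd
  have haeval : (0 : Matrix (Fin N) (Fin N) ℝ)
      = ∑ i ∈ Finset.range (N + 1), (Matrix.charpoly M).coeff i • M ^ i := by
    rw [← hCH]
    conv_lhs => rw [hsum]
    rw [map_sum]
    refine Finset.sum_congr rfl fun i _ => ?_
    rw [Polynomial.aeval_monomial, Algebra.algebraMap_eq_smul_one, smul_mul_assoc, one_mul]
  have h0 : M * qmat N M 0 = ∑ i ∈ Finset.range N,
      (Matrix.charpoly M).coeff (i + 1) • M ^ (i + 1) := by
    rw [qmat, Finset.mul_sum]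
    simp only [Nat.sub_zero]
    refine Finset.sum_congr rfl fun i _ => ?_
    rw [Matrix.mul_smul, pow_succ']
    congr 2
    omega
  rw [h0]
  have := haeval
  rw [Finset.sum_range_succ'] at this
  simp only [pow_zero] at this
  have h1 : ∑ i ∈ Finset.range N, (Matrix.charpoly M).coeff (i + 1) • M ^ (i + 1)
      = -((Matrix.charpoly M).coeff 0 • 1) := by
    have := this.symm
    linear_combination (norm := (push_cast; abel)) this
  exact h1

/-- The matrix of polynomials `∑_j X^j • (qmat j)`. -/
noncomputable def Qpoly (N : ℕ) (M : Matrix (Fin N) (Fin N) ℝ) :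
    Matrix (Fin N) (Fin N) (Polynomial ℝ) :=
  ∑ j ∈ Finset.range N, (Polynomial.X : Polynomial ℝ) ^ j • (qmat N M j).map Polynomial.C

lemma matPolyEquiv_Qpoly (M : Matrix (Fin N) (Fin N) ℝ) :
    matPolyEquiv (Qpoly N M)
      = ∑ j ∈ Finset.range N, Polynomial.C (qmat N M j) * Polynomial.X ^ j := by
  rw [Qpoly, map_sum]
  refine Finset.sum_congr rfl fun j _ => ?_
  rw [matPolyEquiv_map_smul, matPolyEquiv_map_C]
  rw [Polynomial.map_pow, Polynomial.map_X]
  rw [Polynomial.X_pow_mul]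

lemma coeff_sum_C_mul_X_pow {R : Type*} [Semiring R] (f : ℕ → R) (m : ℕ) :
    (∑ j ∈ Finset.range N, Polynomial.C (f j) * Polynomial.X ^ j).coeff m
      = if m < N then f m else 0 := by
  rw [Polynomial.finset_sum_coeff]
  simp only [Polynomial.coeff_C_mul, Polynomial.coeff_X_pow, mul_ite, mul_one, mul_zero]
  simp [Finset.sum_ite_eq, Finset.mem_range]

lemma key_mul (M : Matrix (Fin N) (Fin N) ℝ) :
    (Polynomial.X - Polynomial.C M) * (∑ j ∈ Finset.range N, Polynomial.C (qmat N M j) * Polynomial.X ^ j)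
      = (Matrix.charpoly M).map (algebraMap ℝ (Matrix (Fin N) (Fin N) ℝ)) := by
  ext m : 1
  rw [sub_mul, Polynomial.coeff_sub]
  rw [Polynomial.coeff_map]
  cases m with
  | zero =>
    rw [Polynomial.mul_coeff_zero, Polynomial.coeff_X_zero, zero_mul, Polynomial.coeff_C_mul,
      coeff_sum_C_mul_X_pow]
    rcases Nat.eq_zero_or_pos N with h0 | h0
    · have hch : (Matrix.charpoly M) = 1 := Matrix.det_eq_one_of_card_eq_zero (by simp [h0])
      subst h0
      simp [hch]
      exact Subsingleton.elim _ _
    · rw [if_pos h0]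
      have := M_mul_qmat_zero M
      rw [zero_sub, this, neg_neg, Algebra.algebraMap_eq_smul_one]
  | succ m =>
    rw [Polynomial.coeff_X_mul, Polynomial.coeff_C_mul, coeff_sum_C_mul_X_pow,
      coeff_sum_C_mul_X_pow]
    have hrec := qmat_rec M (m + 1) (by omega)
    simp only [Nat.add_sub_cancel] at hrec
    rw [Algebra.algebraMap_eq_smul_one]
    rcases lt_or_ge m N with h1 | h1
    · rw [if_pos h1]
      rcases lt_or_ge (m + 1) N with h2 | h2
      · rw [if_pos h2, ← hrec]
      · rw [if_neg (by omega), mul_zero, sub_zero]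
        rw [qmat_eq_zero M h2, mul_zero, sub_zero] at hrec
        exact hrec
    · rw [if_neg (by omega), if_neg (by omega), mul_zero, sub_zero]
      rw [qmat_eq_zero M h1, qmat_eq_zero M (by omega : N ≤ m + 1), mul_zero, sub_zero] at hrec
      exact hrec

lemma charpoly_ne_zero (M : Matrix (Fin N) (Fin N) ℝ) : Matrix.charpoly M ≠ 0 :=
  (Matrix.charpoly_monic M).ne_zero

lemma adjugate_charmatrix (M : Matrix (Fin N) (Fin N) ℝ) :
    Matrix.adjugate (Matrix.charmatrix M) = Qpoly N M := by
  set A := Matrix.charmatrix M with hA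
  set p := Matrix.charpoly M with hp
  have h1 : A * Qpoly N M = p • (1 : Matrix (Fin N) (Fin N) (Polynomial ℝ)) := by
    apply matPolyEquiv.injective
    rw [_root_.map_mul, matPolyEquiv_charmatrix, matPolyEquiv_Qpoly, key_mul, matPolyEquiv_smul_one]
  have h2 : p • Matrix.adjugate A = p • Qpoly N M := by
    calc p • Matrix.adjugate A = Matrix.adjugate A * (p • 1) := by
          rw [Matrix.mul_smul, mul_one]
      _ = Matrix.adjugate A * (A * Qpoly N M) := by rw [h1]
      _ = (Matrix.adjugate A * A) * Qpoly N M := by rw [mul_assoc]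
      _ = (p • 1) * Qpoly N M := by
          rw [Matrix.adjugate_mul]
          rw [hp, Matrix.charpoly, hA]
      _ = p • Qpoly N M := by rw [Matrix.smul_mul, one_mul]
  refine Matrix.ext fun i j => ?_
  have h3 : p * (Matrix.adjugate A i j) = p * (Qpoly N M i j) := by
    have h4 := congrFun (congrFun h2 i) j
    simpa [Matrix.smul_apply, smul_eq_mul] using h4
  have hpne : p ≠ 0 := charpoly_ne_zero M
  exact mul_left_cancel₀ hpne h3

noncomputable def Dpoly (N : ℕ) (M V : Matrix (Fin N) (Fin N) ℝ) : Polynomial ℝ :=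
  ∑ j ∈ Finset.range N, Polynomial.C (Matrix.trace (qmat N M j * V)) * Polynomial.X ^ j

lemma Dpoly_coeff (M V : Matrix (Fin N) (Fin N) ℝ) (m : ℕ) :
    (Dpoly N M V).coeff m = if m < N then Matrix.trace (qmat N M m * V) else 0 :=
  coeff_sum_C_mul_X_pow _ m

lemma Dpoly_degree (M V : Matrix (Fin N) (Fin N) ℝ) :
    (Dpoly N M V).degree < (N + 1 : ℕ) := by
  refine lt_of_le_of_lt (Polynomial.degree_sum_le _ _) ?_
  rw [Finset.sup_lt_iff (by exact_mod_cast WithBot.bot_lt_coe _)]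
  intro j hj
  refine lt_of_le_of_lt (Polynomial.degree_C_mul_X_pow_le _ _) ?_
  exact_mod_cast Nat.lt_succ_of_lt (Finset.mem_range.mp hj) |>.trans_le (by omega)

lemma charmatrix_map_eval (M : Matrix (Fin N) (Fin N) ℝ) (x : ℝ) :
    (Matrix.charmatrix M).map (Polynomial.eval x)
      = x • (1 : Matrix (Fin N) (Fin N) ℝ) - M := by
  refine Matrix.ext fun i j => ?_
  rw [Matrix.map_apply, Matrix.charmatrix_apply]
  by_cases h : i = j
  · subst h
    simp [Matrix.one_apply_eq]
  · simp [Matrix.one_apply_ne h, Matrix.diagonal_apply_ne _ h, h]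

lemma Qpoly_map_eval (M : Matrix (Fin N) (Fin N) ℝ) (x : ℝ) :
    (Qpoly N M).map (Polynomial.eval x) = ∑ j ∈ Finset.range N, x ^ j • qmat N M j := by
  refine Matrix.ext fun i j' => ?_
  rw [Matrix.map_apply, Qpoly]
  rw [Matrix.sum_apply, Matrix.sum_apply]
  rw [Polynomial.eval_finset_sum]
  refine Finset.sum_congr rfl fun j _ => ?_
  rw [Matrix.smul_apply, Matrix.map_apply, smul_eq_mul, Polynomial.eval_mul,
    Polynomial.eval_pow, Polynomial.eval_X, Polynomial.eval_C, Matrix.smul_apply, smul_eq_mul]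

lemma trace_adjugate_eval (M V : Matrix (Fin N) (Fin N) ℝ) (x : ℝ) :
    Matrix.trace (Matrix.adjugate (x • (1 : Matrix (Fin N) (Fin N) ℝ) - M) * V)
      = (Dpoly N M V).eval x := by
  have h1 : x • (1 : Matrix (Fin N) (Fin N) ℝ) - M
      = (Polynomial.evalRingHom x).mapMatrix (Matrix.charmatrix M) := by
    rw [RingHom.mapMatrix_apply]
    exact (charmatrix_map_eval M x).symm
  rw [h1, ← RingHom.map_adjugate, adjugate_charmatrix, RingHom.mapMatrix_apply]
  have h2 : (Qpoly N M).map (Polynomial.evalRingHom x) = ∑ j ∈ Finset.range N, x ^ j • qmat N M j :=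
    Qpoly_map_eval M x
  rw [h2, Finset.sum_mul, Matrix.trace_sum, Dpoly, Polynomial.eval_finset_sum]
  refine Finset.sum_congr rfl fun j _ => ?_
  rw [Matrix.smul_mul, Matrix.trace_smul, Polynomial.eval_mul, Polynomial.eval_pow,
    Polynomial.eval_X, Polynomial.eval_C, smul_eq_mul, mul_comm]

lemma eval_charpoly (M : Matrix (Fin N) (Fin N) ℝ) (x : ℝ) :
    (Matrix.charpoly M).eval x = (x • (1 : Matrix (Fin N) (Fin N) ℝ) - M).det := by
  rw [← charmatrix_map_eval M x, Matrix.charpoly]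
  have := RingHom.map_det (Polynomial.evalRingHom x) (Matrix.charmatrix M)
  rw [RingHom.mapMatrix_apply] at this
  rw [Polynomial.coe_evalRingHom] at this
  exact this

noncomputable def lagW (N k : ℕ) (i : ℕ) : ℝ :=
  (Lagrange.basis (Finset.range (N + 1)) (fun n : ℕ => (n : ℝ)) i).coeff (N - k)

lemma coeff_eq_sum_eval {k : ℕ} (f : Polynomial ℝ) (hf : f.degree < (N + 1 : ℕ)) :
    f.coeff (N - k) = ∑ i ∈ Finset.range (N + 1), f.eval (i : ℝ) * lagW N k i := by
  have hinj : Set.InjOn (fun n : ℕ => (n : ℝ)) (Finset.range (N + 1)) :=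
    fun a _ b _ h => Nat.cast_injective h
  have hdeg : f.degree < (Finset.range (N + 1)).card := by
    rwa [Finset.card_range]
  have hrep := Lagrange.eq_interpolate hinj hdeg
  conv_lhs => rw [hrep]
  rw [Lagrange.interpolate_apply, Polynomial.finset_sum_coeff]
  exact Finset.sum_congr rfl fun i _ => by rw [Polynomial.coeff_C_mul]; rfl

lemma newton_eq_qmat {k : ℕ} (hk1 : 1 ≤ k) (hkN : k ≤ N) (M : Matrix (Fin N) (Fin N) ℝ) :
    newtonTransform N (k - 1) M = ((-1 : ℝ)) ^ (k - 1) • qmat N M (N - k) := by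
  rw [newtonTransform, qmat, Finset.smul_sum]
  have hr : (k - 1) + 1 = k := by omega
  have hr2 : N - (N - k) = k := by omega
  rw [hr, hr2]
  refine Finset.sum_congr rfl fun i hi => ?_
  have hik : i ≤ k - 1 := by
    have := Finset.mem_range.mp hi; omega
  rw [msigma, smul_smul]
  congr 1
  have h1 : N - (k - 1 - i) = (N - k) + 1 + i := by omega
  rw [h1, ← mul_assoc]
  congr 1
  rw [← pow_add]
  congr 1
  omega

theorem sigma_k_hasDerivAt {N : ℕ} (hN : 1 ≤ N) {k : ℕ} (hk1 : 1 ≤ k) (hkN : k ≤ N)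
    (B : ℝ → Matrix (Fin N) (Fin N) ℝ) (t₀ : ℝ) (Bdot : Matrix (Fin N) (Fin N) ℝ)
    (hB : HasDerivAt B Bdot t₀) :
    HasDerivAt (fun t => msigma N k (B t))
      (Matrix.trace (newtonTransform N (k - 1) (B t₀) * Bdot)) t₀ := by
  set M := B t₀ with hM
  set V := Bdot with hV
  have hdegch : ∀ t, (Matrix.charpoly (B t)).degree < ((N + 1 : ℕ) : WithBot ℕ) := by
    intro t
    rw [Matrix.charpoly_degree_eq_dim, Fintype.card_fin]
    exact_mod_cast Nat.lt_succ_self N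
  have hterm : ∀ i ∈ Finset.range (N + 1), HasDerivAt
      (fun t => (((i : ℝ)) • (1 : Matrix (Fin N) (Fin N) ℝ) - B t).det * lagW N k i)
      (-((Dpoly N M V).eval (i : ℝ)) * lagW N k i) t₀ := by
    intro i _
    have hA : HasDerivAt (fun t => ((i : ℝ)) • (1 : Matrix (Fin N) (Fin N) ℝ) - B t)
        (0 - V) t₀ := (hasDerivAt_const t₀ _).sub hB
    have hj := jacobi hA
    have htr : Matrix.trace (Matrix.adjugate (((i : ℝ)) • (1 : Matrix (Fin N) (Fin N) ℝ) - M)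
        * (0 - V)) = -((Dpoly N M V).eval (i : ℝ)) := by
      rw [zero_sub, Matrix.mul_neg, Matrix.trace_neg, trace_adjugate_eval]
    rw [htr] at hj
    exact hj.mul_const _
  have hsum : HasDerivAt
      (fun t => ∑ i ∈ Finset.range (N + 1),
        (((i : ℝ)) • (1 : Matrix (Fin N) (Fin N) ℝ) - B t).det * lagW N k i)
      (∑ i ∈ Finset.range (N + 1), -((Dpoly N M V).eval (i : ℝ)) * lagW N k i) t₀ :=
    HasDerivAt.fun_sum hterm
  have hfun : (fun t => msigma N k (B t))
      = fun t => (-1 : ℝ) ^ k * ∑ i ∈ Finset.range (N + 1),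
          (((i : ℝ)) • (1 : Matrix (Fin N) (Fin N) ℝ) - B t).det * lagW N k i := by
    funext t
    rw [msigma, coeff_eq_sum_eval _ (hdegch t)]
    congr 1
    exact Finset.sum_congr rfl fun i _ => by rw [_root_.eval_charpoly]
  have hD := hsum.const_mul ((-1 : ℝ) ^ k)
  rw [hfun]
  have hval : (-1 : ℝ) ^ k * ∑ i ∈ Finset.range (N + 1),
        -((Dpoly N M V).eval (i : ℝ)) * lagW N k i
      = Matrix.trace (newtonTransform N (k - 1) M * V) := by
    have h1 : ∑ i ∈ Finset.range (N + 1), -((Dpoly N M V).eval (i : ℝ)) * lagW N k i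
        = -((Dpoly N M V).coeff (N - k)) := by
      rw [coeff_eq_sum_eval _ (Dpoly_degree M V), ← Finset.sum_neg_distrib]
      exact Finset.sum_congr rfl fun i _ => (neg_mul _ _)
    rw [h1, Dpoly_coeff, if_pos (by omega : N - k < N)]
    rw [newton_eq_qmat hk1 hkN, Matrix.smul_mul, Matrix.trace_smul, smul_eq_mul]
    have hpow : (-1 : ℝ) ^ k = (-1) ^ (k - 1) * (-1) := by
      conv_lhs => rw [show k = (k - 1) + 1 from by omega]
      rw [pow_succ]
    rw [hpow]
    ring
  rw [← hval]
  exact hD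
end

section
/- Let N ≥ 1 and 1 ≤ k ≤ N. The cone Γ_k^+ ⊆ ℝ^N is convex. -/
/-- The k-th elementary symmetric function of a vector `lam ∈ ℝ^N`. -/
def vsigma (N k : ℕ) (lam : Fin N → ℝ) : ℝ :=
  ∑ s ∈ Finset.powersetCard k Finset.univ, ∏ i ∈ s, lam i

/-- `Γ_k^+` is the connected component of `{λ : σ_k(λ) > 0}` containing `(1,…,1)`. -/
def GammaPlus (N k : ℕ) : Set (Fin N → ℝ) :=
  connectedComponentIn {lam | 0 < vsigma N k lam} (fun _ => 1)

open Finset Polynomial Complex Topology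

/-- the complex modulus as an absolute value -/
noncomputable def Complex.abs : AbsoluteValue ℂ ℝ where
  toFun z := ‖z‖
  map_mul' := norm_mul
  nonneg' := norm_nonneg
  eq_zero' _ := norm_eq_zero
  add_le' := norm_add_le

theorem Complex.abs_apply (z : ℂ) : Complex.abs z = ‖z‖ := rfl

theorem Complex.abs_ofReal (r : ℝ) : Complex.abs (r : ℂ) = |r| := by
  rw [Complex.abs_apply, Complex.norm_real, Real.norm_eq_abs]

theorem Complex.continuous_abs : Continuous fun z : ℂ => Complex.abs z := continuous_norm

noncomputable section GammaAux

namespace GammaAux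

/-- elementary symmetric polynomial over a commutative ring -/
def esym (N k : ℕ) {R : Type*} [CommRing R] (v : Fin N → R) : R :=
  ∑ s ∈ Finset.powersetCard k Finset.univ, ∏ i ∈ s, v i

/-- the one-variable polynomial `t ↦ esym (a + t m)` -/
def QP (N k : ℕ) {R : Type*} [CommRing R] (a m : Fin N → R) : Polynomial R :=
  ∑ s ∈ Finset.powersetCard k Finset.univ,
    ∏ i ∈ s, (Polynomial.C (a i) + Polynomial.C (m i) * Polynomial.X)

variable {N k : ℕ}

theorem vsigma_eq_esym (x : Fin N → ℝ) : vsigma N k x = esym N k x := rfl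

theorem QP_eval {R : Type*} [CommRing R] (a m : Fin N → R) (t : R) :
    (QP N k a m).eval t = esym N k (fun i => a i + m i * t) := by
  simp [QP, esym, eval_finset_sum, eval_prod]

theorem natDegree_lin {R : Type*} [CommRing R] (a m : R) :
    (Polynomial.C a + Polynomial.C m * Polynomial.X).natDegree ≤ 1 := by
  refine le_trans (natDegree_add_le _ _) ?_
  simp only [natDegree_C, max_le_iff]
  exact ⟨Nat.zero_le _, le_trans (natDegree_mul_le) (by simp [Polynomial.natDegree_X_le])⟩

theorem natDegree_prod_lin_le {R : Type*} [CommRing R] (s : Finset (Fin N)) (a m : Fin N → R) :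
    (∏ i ∈ s, (Polynomial.C (a i) + Polynomial.C (m i) * Polynomial.X)).natDegree ≤ s.card := by
  refine le_trans (natDegree_prod_le _ _) ?_
  have h1 : ∑ i ∈ s, (Polynomial.C (a i) + Polynomial.C (m i) * Polynomial.X).natDegree
      ≤ ∑ _i ∈ s, 1 := Finset.sum_le_sum (fun i _ => natDegree_lin _ _)
  simpa using h1

theorem coeff_card_prod_lin {R : Type*} [CommRing R] (s : Finset (Fin N)) (a m : Fin N → R) :
    (∏ i ∈ s, (Polynomial.C (a i) + Polynomial.C (m i) * Polynomial.X)).coeff s.card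
      = ∏ i ∈ s, m i := by
  classical
  induction s using Finset.induction with
  | empty => simp
  | insert j s hj ih =>
    rw [Finset.prod_insert hj, Finset.prod_insert hj, Finset.card_insert_of_notMem hj]
    have hexp : (Polynomial.C (a j) + Polynomial.C (m j) * Polynomial.X) *
        (∏ i ∈ s, (Polynomial.C (a i) + Polynomial.C (m i) * Polynomial.X))
        = Polynomial.C (a j) * (∏ i ∈ s, (Polynomial.C (a i) + Polynomial.C (m i) * Polynomial.X))
          + Polynomial.C (m j) * (Polynomial.X * (∏ i ∈ s, (Polynomial.C (a i) + Polynomial.C (m i) * Polynomial.X))) := by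
      ring
    rw [hexp, coeff_add, coeff_C_mul, coeff_C_mul, coeff_X_mul, ih,
      coeff_eq_zero_of_natDegree_lt (lt_of_le_of_lt (natDegree_prod_lin_le s a m) (Nat.lt_succ_self _))]
    ring

theorem QP_coeff_k {R : Type*} [CommRing R] (a m : Fin N → R) :
    (QP N k a m).coeff k = esym N k m := by
  classical
  rw [QP, finset_sum_coeff, esym]
  refine Finset.sum_congr rfl (fun s hs => ?_)
  have hc : s.card = k := (Finset.mem_powersetCard.mp hs).2
  rw [← hc, coeff_card_prod_lin]

theorem QP_natDegree_le {R : Type*} [CommRing R] (a m : Fin N → R) :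
    (QP N k a m).natDegree ≤ k := by
  classical
  refine le_trans (natDegree_sum_le _ _) ?_
  refine (Finset.fold_max_le k).mpr ⟨Nat.zero_le _, fun s hs => ?_⟩
  have hc : s.card = k := (Finset.mem_powersetCard.mp hs).2
  exact le_trans (natDegree_prod_lin_le s a m) (le_of_eq hc)

theorem continuous_coeff_prod_lin {X : Type*} [TopologicalSpace X]
    (s : Finset (Fin N)) (A M : X → Fin N → ℂ) (hA : Continuous A) (hM : Continuous M) :
    ∀ j : ℕ, Continuous fun x =>
      (∏ i ∈ s, (Polynomial.C (A x i) + Polynomial.C (M x i) * Polynomial.X)).coeff j := by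
  classical
  induction s using Finset.induction with
  | empty => intro j; simpa [coeff_one] using continuous_const
  | insert j0 s hj ih =>
    intro j
    have hexp : ∀ x, (∏ i ∈ insert j0 s, (Polynomial.C (A x i) + Polynomial.C (M x i) * Polynomial.X)).coeff j
        = A x j0 * (∏ i ∈ s, (Polynomial.C (A x i) + Polynomial.C (M x i) * Polynomial.X)).coeff j
          + M x j0 * (Polynomial.X * (∏ i ∈ s, (Polynomial.C (A x i) + Polynomial.C (M x i) * Polynomial.X))).coeff j := by
      intro x
      rw [Finset.prod_insert hj]
      have : (Polynomial.C (A x j0) + Polynomial.C (M x j0) * Polynomial.X) *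
          (∏ i ∈ s, (Polynomial.C (A x i) + Polynomial.C (M x i) * Polynomial.X))
          = Polynomial.C (A x j0) * (∏ i ∈ s, (Polynomial.C (A x i) + Polynomial.C (M x i) * Polynomial.X))
            + Polynomial.C (M x j0) * (Polynomial.X * (∏ i ∈ s, (Polynomial.C (A x i) + Polynomial.C (M x i) * Polynomial.X))) := by
        ring
      rw [this, coeff_add, coeff_C_mul, coeff_C_mul]
    simp only [hexp]
    have hXP : Continuous fun x =>
        (Polynomial.X * (∏ i ∈ s, (Polynomial.C (A x i) + Polynomial.C (M x i) * Polynomial.X))).coeff j := by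
      cases j with
      | zero => simpa using continuous_const
      | succ n =>
        simp only [coeff_X_mul]
        exact ih n
    exact (((continuous_apply j0).comp hA).mul (ih j)).add
      (((continuous_apply j0).comp hM).mul hXP)

theorem continuous_QP_coeff {X : Type*} [TopologicalSpace X]
    (A M : X → Fin N → ℂ) (hA : Continuous A) (hM : Continuous M) (j : ℕ) :
    Continuous fun x => (QP N k (A x) (M x)).coeff j := by
  simp only [QP, finset_sum_coeff]
  exact continuous_finset_sum _ (fun s _ => continuous_coeff_prod_lin s A M hA hM j)

theorem continuous_esym {R : Type*} [CommRing R] [TopologicalSpace R] [IsTopologicalRing R] :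
    Continuous fun v : Fin N → R => esym N k v := by
  refine continuous_finset_sum _ (fun s _ => ?_)
  exact continuous_finset_prod _ (fun i _ => continuous_apply i)

theorem esym_smul {R : Type*} [CommRing R] (c : R) (v : Fin N → R) :
    esym N k (fun i => c * v i) = c ^ k * esym N k v := by
  rw [esym, esym, Finset.mul_sum]
  refine Finset.sum_congr rfl (fun s hs => ?_)
  have hc : s.card = k := (Finset.mem_powersetCard.mp hs).2
  rw [Finset.prod_mul_distrib, Finset.prod_const, hc]

theorem esym_conj (v : Fin N → ℂ) :
    esym N k (fun i => (starRingEnd ℂ) (v i)) = (starRingEnd ℂ) (esym N k v) := by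
  rw [esym, esym, map_sum]
  refine Finset.sum_congr rfl (fun s _ => ?_)
  rw [map_prod]

theorem esym_ofReal (x : Fin N → ℝ) :
    ((vsigma N k x : ℝ) : ℂ) = esym N k (fun i => (x i : ℂ)) := by
  rw [vsigma_eq_esym, esym, esym]
  push_cast
  rfl

theorem root_abs_le {P : Polynomial ℂ} {k : ℕ} (hdeg : P.natDegree ≤ k) {t : ℂ}
    (ht : P.eval t = 0) (hk : P.coeff k ≠ 0) :
    Complex.abs t ≤ 1 + (∑ j ∈ Finset.range k, Complex.abs (P.coeff j)) / Complex.abs (P.coeff k) := by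
  have hBnn : 0 ≤ (∑ j ∈ Finset.range k, Complex.abs (P.coeff j)) / Complex.abs (P.coeff k) := by
    apply div_nonneg
    · exact Finset.sum_nonneg (fun j _ => AbsoluteValue.nonneg _ _)
    · exact AbsoluteValue.nonneg _ _
  rcases le_or_gt (Complex.abs t) 1 with h1 | h1
  · linarith
  have hsum : P.eval t = ∑ j ∈ Finset.range (k + 1), P.coeff j * t ^ j :=
    eval_eq_sum_range' (Nat.lt_succ_of_le hdeg) t
  rw [Finset.sum_range_succ] at hsum
  have hck : P.coeff k * t ^ k = -∑ j ∈ Finset.range k, P.coeff j * t ^ j := by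
    rw [ht] at hsum; linear_combination -hsum
  rcases Nat.eq_zero_or_pos k with rfl | hkpos
  · exfalso
    apply hk
    simpa using hck
  -- k ≥ 1
  have habs : Complex.abs (P.coeff k) * Complex.abs t ^ k
      ≤ ∑ j ∈ Finset.range k, Complex.abs (P.coeff j) * Complex.abs t ^ j := by
    calc Complex.abs (P.coeff k) * Complex.abs t ^ k
        = Complex.abs (P.coeff k * t ^ k) := by rw [map_mul, map_pow]
      _ = Complex.abs (∑ j ∈ Finset.range k, P.coeff j * t ^ j) := by rw [hck, map_neg_eq_map]
      _ ≤ ∑ j ∈ Finset.range k, Complex.abs (P.coeff j * t ^ j) :=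
          Complex.abs.sum_le _ _
      _ = ∑ j ∈ Finset.range k, Complex.abs (P.coeff j) * Complex.abs t ^ j := by
          simp [map_mul, map_pow]
  have hstep : ∀ j ∈ Finset.range k, Complex.abs (P.coeff j) * Complex.abs t ^ j
      ≤ Complex.abs (P.coeff j) * Complex.abs t ^ (k - 1) := by
    intro j hj
    have hj' : j ≤ k - 1 := Nat.le_sub_one_of_lt (Finset.mem_range.mp hj)
    exact mul_le_mul_of_nonneg_left (pow_le_pow_right₀ (le_of_lt h1) hj') (AbsoluteValue.nonneg _ _)
  have habs2 : Complex.abs (P.coeff k) * Complex.abs t ^ k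
      ≤ (∑ j ∈ Finset.range k, Complex.abs (P.coeff j)) * Complex.abs t ^ (k - 1) := by
    calc Complex.abs (P.coeff k) * Complex.abs t ^ k
        ≤ ∑ j ∈ Finset.range k, Complex.abs (P.coeff j) * Complex.abs t ^ j := habs
      _ ≤ ∑ j ∈ Finset.range k, Complex.abs (P.coeff j) * Complex.abs t ^ (k - 1) :=
          Finset.sum_le_sum hstep
      _ = (∑ j ∈ Finset.range k, Complex.abs (P.coeff j)) * Complex.abs t ^ (k - 1) := by
          rw [Finset.sum_mul]
  have hpow : Complex.abs t ^ k = Complex.abs t ^ (k - 1) * Complex.abs t := by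
    conv_lhs => rw [show k = (k - 1) + 1 by omega]
    rw [pow_succ]
  have htpos : (0:ℝ) < Complex.abs t ^ (k - 1) := pow_pos (lt_trans one_pos h1) _
  have hfin : Complex.abs (P.coeff k) * Complex.abs t
      ≤ ∑ j ∈ Finset.range k, Complex.abs (P.coeff j) := by
    have := habs2
    rw [hpow] at this
    nlinarith [this, htpos]
  have hckpos : (0:ℝ) < Complex.abs (P.coeff k) := AbsoluteValue.pos _ hk
  have hfin2 : Complex.abs t ≤ (∑ j ∈ Finset.range k, Complex.abs (P.coeff j)) / Complex.abs (P.coeff k) := by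
    rw [le_div_iff₀ hckpos, mul_comm]; exact hfin
  linarith

theorem pow_card_le_abs_eval_prod {m : ℝ} (hm : 0 ≤ m) {t : ℂ} :
    ∀ (s : Multiset ℂ), (∀ w ∈ s, m ≤ Complex.abs (t - w)) →
      m ^ Multiset.card s ≤ Complex.abs ((s.map fun w => Polynomial.X - Polynomial.C w).prod.eval t) := by
  intro s
  induction s using Multiset.induction with
  | empty => simp
  | cons a s ih =>
    intro h
    have h1 : m ≤ Complex.abs (t - a) := by
      simpa using h a (Multiset.mem_cons_self a s)
    have h2 : m ^ Multiset.card s ≤ Complex.abs ((s.map fun w => Polynomial.X - Polynomial.C w).prod.eval t) :=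
      ih (fun w hw => h w (Multiset.mem_cons_of_mem hw))
    have key : (((a ::ₘ s).map fun w => Polynomial.X - Polynomial.C w).prod).eval t
        = (t - a) * ((s.map fun w => Polynomial.X - Polynomial.C w).prod).eval t := by
      rw [Multiset.map_cons, Multiset.prod_cons, Polynomial.eval_mul]
      simp
    rw [key, map_mul, Multiset.card_cons, pow_succ, mul_comm (m ^ Multiset.card s) m]
    exact mul_le_mul h1 h2 (pow_nonneg hm _) (AbsoluteValue.nonneg _ _)

set_option maxHeartbeats 1000000 in
theorem abs_eval_ge {P : Polynomial ℂ} (hP : P ≠ 0) {m : ℝ} (hm : 0 ≤ m)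
    {t : ℂ} (hroots : ∀ w : ℂ, P.IsRoot w → m ≤ Complex.abs (t - w)) :
    Complex.abs P.leadingCoeff * m ^ P.natDegree ≤ Complex.abs (P.eval t) := by
  have hsplit : P.Splits := IsAlgClosed.splits P
  have hcard : Multiset.card P.roots = P.natDegree := (Polynomial.splits_iff_card_roots).mp hsplit
  have heq := Polynomial.C_leadingCoeff_mul_prod_multiset_X_sub_C hcard
  have hroot' : ∀ w ∈ P.roots, m ≤ Complex.abs (t - w) := by
    intro w hw
    exact hroots w (Polynomial.isRoot_of_mem_roots hw)
  have hlow := pow_card_le_abs_eval_prod hm P.roots hroot'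
  rw [hcard] at hlow
  have step1 : Complex.abs P.leadingCoeff * m ^ P.natDegree
      ≤ Complex.abs P.leadingCoeff *
          Complex.abs ((P.roots.map fun w => Polynomial.X - Polynomial.C w).prod.eval t) :=
    mul_le_mul_of_nonneg_left hlow (AbsoluteValue.nonneg _ _)
  have step2 : Complex.abs P.leadingCoeff *
          Complex.abs ((P.roots.map fun w => Polynomial.X - Polynomial.C w).prod.eval t)
      = Complex.abs (P.eval t) := by
    conv_rhs => rw [← heq]
    rw [Polynomial.eval_mul, map_mul, Polynomial.eval_C]
  exact step1.trans_eq step2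

theorem ratio_im {t : ℂ} (ht : t.im ≠ 0) :
    ∀ (s : Multiset ℂ), (∀ r ∈ s, r.im = 0) →
      ((s.map fun r => Polynomial.X - Polynomial.C r).prod.eval t ≠ 0) ∧
      (t.im * (((Polynomial.derivative (s.map fun r => Polynomial.X - Polynomial.C r).prod).eval t) /
        ((s.map fun r => Polynomial.X - Polynomial.C r).prod.eval t)).im ≤ 0) ∧
      (s ≠ 0 → t.im * (((Polynomial.derivative (s.map fun r => Polynomial.X - Polynomial.C r).prod).eval t) /
        ((s.map fun r => Polynomial.X - Polynomial.C r).prod.eval t)).im < 0) := by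
  intro s
  induction s using Multiset.induction with
  | empty =>
    intro _
    refine ⟨by simp, by simp, fun h => absurd rfl h⟩
  | cons a s ih =>
    intro h
    have ha : a.im = 0 := h a (Multiset.mem_cons_self a s)
    have hs : ∀ r ∈ s, r.im = 0 := fun r hr => h r (Multiset.mem_cons_of_mem hr)
    obtain ⟨hne, hle, _⟩ := ih hs
    have hta : t - a ≠ 0 := by
      intro hcon
      apply ht
      have : (t - a).im = 0 := by rw [hcon]; simp
      rw [Complex.sub_im, ha] at this
      linarith
    set g := (s.map fun r => Polynomial.X - Polynomial.C r).prod with hg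
    have hprod : ((a ::ₘ s).map fun r => Polynomial.X - Polynomial.C r).prod
        = (Polynomial.X - Polynomial.C a) * g := by
      rw [Multiset.map_cons, Multiset.prod_cons]
    have hevalf : (((a ::ₘ s).map fun r => Polynomial.X - Polynomial.C r).prod).eval t
        = (t - a) * g.eval t := by
      rw [hprod, Polynomial.eval_mul]
      simp
    have hfne : (((a ::ₘ s).map fun r => Polynomial.X - Polynomial.C r).prod).eval t ≠ 0 := by
      rw [hevalf]; exact mul_ne_zero hta hne
    have hderiv : (Polynomial.derivative (((a ::ₘ s).map fun r => Polynomial.X - Polynomial.C r).prod)).eval t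
        = g.eval t + (t - a) * (Polynomial.derivative g).eval t := by
      rw [hprod, Polynomial.derivative_mul, Polynomial.derivative_X_sub_C]
      simp
    have hratio : (Polynomial.derivative (((a ::ₘ s).map fun r => Polynomial.X - Polynomial.C r).prod)).eval t /
        ((((a ::ₘ s).map fun r => Polynomial.X - Polynomial.C r).prod).eval t)
        = (t - a)⁻¹ + (Polynomial.derivative g).eval t / g.eval t := by
      rw [hderiv, hevalf]
      field_simp
    have hinv : t.im * ((t - a)⁻¹).im < 0 := by
      rw [Complex.inv_im, Complex.sub_im, ha, sub_zero]
      have hnsq : 0 < Complex.normSq (t - a) := Complex.normSq_pos.mpr hta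
      have : t.im * (-t.im / Complex.normSq (t - a)) = -(t.im ^ 2) / Complex.normSq (t - a) := by ring
      rw [this]
      apply div_neg_of_neg_of_pos _ hnsq
      have : 0 < t.im ^ 2 := by positivity
      linarith
    refine ⟨hfne, ?_, fun _ => ?_⟩
    · rw [hratio, Complex.add_im, mul_add]
      linarith
    · rw [hratio, Complex.add_im, mul_add]
      linarith

theorem natDegree_derivative_eq'' {q : Polynomial ℂ} (hq : q.natDegree ≠ 0) :
    (Polynomial.derivative q).natDegree = q.natDegree - 1 ∧ Polynomial.derivative q ≠ 0 := by
  have hq0 : q ≠ 0 := fun hcon => hq (by simp [hcon])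
  have e : q.natDegree - 1 + 1 = q.natDegree := by omega
  have hco := Polynomial.coeff_derivative q (q.natDegree - 1)
  rw [e] at hco
  have hlc : q.coeff q.natDegree ≠ 0 := Polynomial.leadingCoeff_ne_zero.mpr hq0
  have hcne : (Polynomial.derivative q).coeff (q.natDegree - 1) ≠ 0 := by
    rw [hco]
    exact mul_ne_zero hlc (Nat.cast_add_one_ne_zero _)
  constructor
  · refine le_antisymm (Polynomial.natDegree_derivative_le q) ?_
    exact Polynomial.le_natDegree_of_ne_zero hcne
  · intro hcon
    rw [hcon] at hcne
    simp at hcne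

theorem deriv_real_roots {P : Polynomial ℂ} (hdeg : P.natDegree ≠ 0)
    (hroots : ∀ w : ℂ, P.IsRoot w → w.im = 0) :
    ∀ z : ℂ, (Polynomial.derivative P).IsRoot z → z.im = 0 := by
  intro z hz
  by_contra hzim
  have hP0 : P ≠ 0 := fun hcon => hdeg (by simp [hcon])
  have hsplit : P.Splits := IsAlgClosed.splits P
  have hcard : Multiset.card P.roots = P.natDegree := (Polynomial.splits_iff_card_roots).mp hsplit
  have heq := Polynomial.C_leadingCoeff_mul_prod_multiset_X_sub_C hcard
  have hrr : ∀ r ∈ P.roots, r.im = 0 := fun r hr => hroots r (Polynomial.isRoot_of_mem_roots hr)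
  obtain ⟨hne, _, hlt⟩ := ratio_im hzim P.roots hrr
  have hsne : P.roots ≠ 0 := by
    intro hcon
    rw [hcon] at hcard
    simp at hcard
    exact hdeg hcard.symm
  have hlt' := hlt hsne
  have hratio_ne : ((Polynomial.derivative ((P.roots.map fun r => Polynomial.X - Polynomial.C r).prod)).eval z /
      (((P.roots.map fun r => Polynomial.X - Polynomial.C r).prod).eval z)) ≠ 0 := by
    intro hcon
    rw [hcon] at hlt'
    simp at hlt'
  have hfderiv_ne : (Polynomial.derivative ((P.roots.map fun r => Polynomial.X - Polynomial.C r).prod)).eval z ≠ 0 := by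
    intro hcon
    apply hratio_ne
    rw [hcon, zero_div]
  -- derivative P = C lc * derivative f
  have hdP : Polynomial.derivative P
      = Polynomial.C P.leadingCoeff *
          Polynomial.derivative ((P.roots.map fun r => Polynomial.X - Polynomial.C r).prod) := by
    conv_lhs => rw [← heq]
    rw [Polynomial.derivative_C_mul]
  have : (Polynomial.derivative P).eval z ≠ 0 := by
    rw [hdP, Polynomial.eval_mul, Polynomial.eval_C]
    exact mul_ne_zero (Polynomial.leadingCoeff_ne_zero.mpr hP0) hfderiv_ne
  exact this hz

theorem iterated_real_roots {N : ℕ} (x : Fin N → ℝ) :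
    ∀ m : ℕ, m ≤ N →
      (Polynomial.derivative^[m] (∏ i : Fin N, (Polynomial.X + Polynomial.C (x i : ℂ)))).natDegree = N - m ∧
      (Polynomial.derivative^[m] (∏ i : Fin N, (Polynomial.X + Polynomial.C (x i : ℂ)))) ≠ 0 ∧
      ∀ z : ℂ, (Polynomial.derivative^[m] (∏ i : Fin N, (Polynomial.X + Polynomial.C (x i : ℂ)))).IsRoot z → z.im = 0 := by
  set p : Polynomial ℂ := ∏ i : Fin N, (Polynomial.X + Polynomial.C (x i : ℂ)) with hp
  have hmonic : p.Monic := Polynomial.monic_prod_of_monic _ _ (fun i _ => Polynomial.monic_X_add_C _)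
  have hpdeg : p.natDegree = N := by
    rw [hp, Polynomial.natDegree_prod_of_monic _ _ (fun i _ => Polynomial.monic_X_add_C _)]
    simp
  intro m
  induction m with
  | zero =>
    intro _
    refine ⟨by simpa using hpdeg, by simpa using hmonic.ne_zero, ?_⟩
    intro z hz
    simp only [Function.iterate_zero, id_eq] at hz
    rw [Polynomial.IsRoot, hp, Polynomial.eval_prod] at hz
    obtain ⟨i, _, hi⟩ := Finset.prod_eq_zero_iff.mp hz
    have : z = -(x i : ℂ) := by
      simp only [Polynomial.eval_add, Polynomial.eval_X, Polynomial.eval_C] at hi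
      linear_combination hi
    rw [this]
    simp
  | succ m ih =>
    intro hm
    obtain ⟨hdeg, hne, hroots⟩ := ih (by omega)
    have hdegne : (Polynomial.derivative^[m] p).natDegree ≠ 0 := by
      rw [hdeg]; omega
    obtain ⟨hdeg', hne'⟩ := natDegree_derivative_eq'' hdegne
    rw [Function.iterate_succ_apply']
    refine ⟨by rw [hdeg', hdeg]; omega, hne', ?_⟩
    exact deriv_real_roots hdegne hroots

theorem F1 {N k : ℕ} (hk1 : 1 ≤ k) (hkN : k ≤ N) (x : Fin N → ℝ) (z : ℂ) (hz : z.im ≠ 0) :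
    esym N k (fun i => (x i : ℂ) + z) ≠ 0 := by
  set p : Polynomial ℂ := ∏ i : Fin N, (Polynomial.X + Polynomial.C (x i : ℂ)) with hp
  have hcomp : p.comp (Polynomial.X + Polynomial.C z)
      = ∏ i : Fin N, (Polynomial.X + Polynomial.C ((x i : ℂ) + z)) := by
    rw [hp, Polynomial.prod_comp]
    refine Finset.prod_congr rfl (fun i _ => ?_)
    simp [Polynomial.add_comp]
    ring
  have hcoeff : (p.comp (Polynomial.X + Polynomial.C z)).coeff (N - k)
      = esym N k (fun i => (x i : ℂ) + z) := by
    rw [hcomp]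
    have hcard : N - k ≤ (Finset.univ : Finset (Fin N)).card := by
      rw [Finset.card_univ, Fintype.card_fin]; omega
    rw [Finset.prod_X_add_C_coeff _ _ hcard]
    have hc2 : (Finset.univ : Finset (Fin N)).card - (N - k) = k := by
      rw [Finset.card_univ, Fintype.card_fin]; omega
    rw [hc2, esym]
  have htaylor : (p.comp (Polynomial.X + Polynomial.C z)).coeff (N - k)
      = (Polynomial.hasseDeriv (N - k) p).eval z := by
    rw [← Polynomial.taylor_apply, Polynomial.taylor_coeff]
  intro hcon
  have h0 : (Polynomial.hasseDeriv (N - k) p).eval z = 0 := by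
    rw [← htaylor, hcoeff, hcon]
  have hsmul : (Nat.factorial (N - k)) • (Polynomial.hasseDeriv (N - k) p)
      = Polynomial.derivative^[N - k] p := by
    have h2 := congrFun (Polynomial.factorial_smul_hasseDeriv (R := ℂ) (N - k)) p
    simpa using h2
  have h1 : (Polynomial.derivative^[N - k] p).eval z = 0 := by
    rw [← hsmul, nsmul_eq_mul, Polynomial.eval_mul]
    simp [h0]
  obtain ⟨_, _, hroots⟩ := iterated_real_roots x (N - k) (by omega)
  exact hz (hroots z h1)

theorem root_abs_le' {kk : ℕ} (c : ℕ → ℂ) {t : ℂ}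
    (ht : ∑ j ∈ Finset.range (kk + 1), c j * t ^ j = 0) (hk : c kk ≠ 0) :
    Complex.abs t ≤ 1 + (∑ j ∈ Finset.range kk, Complex.abs (c j)) / Complex.abs (c kk) := by
  have hBnn : 0 ≤ (∑ j ∈ Finset.range kk, Complex.abs (c j)) / Complex.abs (c kk) := by
    apply div_nonneg
    · exact Finset.sum_nonneg (fun j _ => AbsoluteValue.nonneg _ _)
    · exact AbsoluteValue.nonneg _ _
  rcases le_or_gt (Complex.abs t) 1 with h1 | h1
  · linarith
  rw [Finset.sum_range_succ] at ht
  have hck : c kk * t ^ kk = -∑ j ∈ Finset.range kk, c j * t ^ j := by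
    linear_combination ht
  rcases Nat.eq_zero_or_pos kk with rfl | hkpos
  · exfalso; apply hk; simpa using hck
  have habs : Complex.abs (c kk) * Complex.abs t ^ kk
      ≤ ∑ j ∈ Finset.range kk, Complex.abs (c j) * Complex.abs t ^ j := by
    calc Complex.abs (c kk) * Complex.abs t ^ kk
        = Complex.abs (c kk * t ^ kk) := by rw [map_mul, map_pow]
      _ = Complex.abs (∑ j ∈ Finset.range kk, c j * t ^ j) := by rw [hck, map_neg_eq_map]
      _ ≤ ∑ j ∈ Finset.range kk, Complex.abs (c j * t ^ j) := Complex.abs.sum_le _ _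
      _ = ∑ j ∈ Finset.range kk, Complex.abs (c j) * Complex.abs t ^ j := by
          simp [map_mul, map_pow]
  have hstep : ∀ j ∈ Finset.range kk, Complex.abs (c j) * Complex.abs t ^ j
      ≤ Complex.abs (c j) * Complex.abs t ^ (kk - 1) := by
    intro j hj
    have hj' : j ≤ kk - 1 := Nat.le_sub_one_of_lt (Finset.mem_range.mp hj)
    exact mul_le_mul_of_nonneg_left (pow_le_pow_right₀ (le_of_lt h1) hj') (AbsoluteValue.nonneg _ _)
  have habs2 : Complex.abs (c kk) * Complex.abs t ^ kk
      ≤ (∑ j ∈ Finset.range kk, Complex.abs (c j)) * Complex.abs t ^ (kk - 1) := by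
    calc Complex.abs (c kk) * Complex.abs t ^ kk
        ≤ ∑ j ∈ Finset.range kk, Complex.abs (c j) * Complex.abs t ^ j := habs
      _ ≤ ∑ j ∈ Finset.range kk, Complex.abs (c j) * Complex.abs t ^ (kk - 1) :=
          Finset.sum_le_sum hstep
      _ = (∑ j ∈ Finset.range kk, Complex.abs (c j)) * Complex.abs t ^ (kk - 1) := by
          rw [Finset.sum_mul]
  have hpow : Complex.abs t ^ kk = Complex.abs t ^ (kk - 1) * Complex.abs t := by
    conv_lhs => rw [show kk = (kk - 1) + 1 by omega]
    rw [pow_succ]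
  have htpos : (0:ℝ) < Complex.abs t ^ (kk - 1) := pow_pos (lt_trans one_pos h1) _
  have hfin : Complex.abs (c kk) * Complex.abs t
      ≤ ∑ j ∈ Finset.range kk, Complex.abs (c j) := by
    have h2 := habs2
    rw [hpow] at h2
    nlinarith [h2, htpos]
  have hckpos : (0:ℝ) < Complex.abs (c kk) := AbsoluteValue.pos _ hk
  have hfin2 : Complex.abs t ≤ (∑ j ∈ Finset.range kk, Complex.abs (c j)) / Complex.abs (c kk) := by
    rw [le_div_iff₀ hckpos, mul_comm]; exact hfin
  linarith

theorem pert {X : Type*} [TopologicalSpace X] {kk : ℕ} (cf : X → ℕ → ℂ)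
    (hcf : ∀ j, j ≤ kk → Continuous fun p => cf p j) {D : Set ℂ} (hD : IsClosed D)
    {p₀ : X} (h0 : cf p₀ kk ≠ 0)
    (hnv : ∀ t ∈ D, (∑ j ∈ Finset.range (kk + 1), cf p₀ j * t ^ j) ≠ 0) :
    ∀ᶠ p in nhds p₀, ∀ t ∈ D, (∑ j ∈ Finset.range (kk + 1), cf p j * t ^ j) ≠ 0 := by
  set c := Complex.abs (cf p₀ kk) with hc
  have hcpos : 0 < c := AbsoluteValue.pos _ h0
  set B := ∑ j ∈ Finset.range kk, Complex.abs (cf p₀ j) with hB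
  have hBnn : 0 ≤ B := Finset.sum_nonneg (fun j _ => AbsoluteValue.nonneg _ _)
  set R := 1 + (B + 1) / (c / 2) with hR
  have hE1 : ∀ᶠ p in nhds p₀, (∑ j ∈ Finset.range kk, Complex.abs (cf p j)) < B + 1 := by
    have hcont : Continuous fun p => ∑ j ∈ Finset.range kk, Complex.abs (cf p j) := by
      apply continuous_finset_sum
      intro j hj
      exact Complex.continuous_abs.comp (hcf j (le_of_lt (Finset.mem_range.mp hj)))
    have := hcont.continuousAt (x := p₀)
    exact this.eventually_lt continuousAt_const (by simp [hB])
  have hE2 : ∀ᶠ p in nhds p₀, c / 2 < Complex.abs (cf p kk) := by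
    have hcont : Continuous fun p => Complex.abs (cf p kk) :=
      Complex.continuous_abs.comp (hcf kk le_rfl)
    have := hcont.continuousAt (x := p₀)
    exact continuousAt_const.eventually_lt this (show c / 2 < Complex.abs (cf p₀ kk) by rw [← hc]; linarith)
  have hK : IsCompact (D ∩ Metric.closedBall 0 R) :=
    (isCompact_closedBall (0:ℂ) R).inter_left hD
  have hFc : Continuous fun z : X × ℂ => ∑ j ∈ Finset.range (kk + 1), cf z.1 j * z.2 ^ j := by
    apply continuous_finset_sum
    intro j hj
    exact (((hcf j (Nat.lt_succ_iff.mp (Finset.mem_range.mp hj))).comp continuous_fst)).mul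
      (continuous_snd.pow j)
  have hE3 : ∀ᶠ p in nhds p₀, ∀ t ∈ D ∩ Metric.closedBall 0 R,
      (∑ j ∈ Finset.range (kk + 1), cf p j * t ^ j) ≠ 0 := by
    apply hK.eventually_forall_of_forall_eventually
    intro t ht
    have hne : (∑ j ∈ Finset.range (kk + 1), cf p₀ j * t ^ j) ≠ 0 := hnv t ht.1
    exact hFc.continuousAt.eventually_ne hne
  filter_upwards [hE1, hE2, hE3] with p h1 h2 h3
  intro t ht
  by_contra habs
  have hckne : cf p kk ≠ 0 := by
    intro hcon
    rw [hcon] at h2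
    simp at h2
    linarith
  have hb := root_abs_le' (cf p) habs hckne
  have htR : Complex.abs t ≤ R := by
    have hfrac : (∑ j ∈ Finset.range kk, Complex.abs (cf p j)) / Complex.abs (cf p kk)
        ≤ (B + 1) / (c / 2) := by
      apply div_le_div₀ (by linarith) (le_of_lt h1) (by linarith) (le_of_lt h2)
    rw [hR]
    linarith
  have htK : t ∈ D ∩ Metric.closedBall 0 R := by
    refine ⟨ht, ?_⟩
    rw [Metric.mem_closedBall, dist_zero_right]
    exact htR
  exact h3 t htK habs

theorem lpos {kk : ℕ} (c : ℕ → ℝ) (hck : 0 < c kk) (s : ℝ)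
    (hs : 1 + (∑ j ∈ Finset.range kk, |c j|) / c kk ≤ s) :
    0 < ∑ j ∈ Finset.range (kk + 1), c j * s ^ j := by
  set B := ∑ j ∈ Finset.range kk, |c j| with hB
  have hBnn : 0 ≤ B := Finset.sum_nonneg (fun j _ => abs_nonneg _)
  have hs1 : 1 ≤ s := by
    have : 0 ≤ B / c kk := div_nonneg hBnn (le_of_lt hck)
    linarith
  have hspos : 0 < s := lt_of_lt_of_le one_pos hs1
  rcases Nat.eq_zero_or_pos kk with rfl | hkpos
  · simpa using hck
  have hspow : 0 < s ^ (kk - 1) := pow_pos hspos _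
  have habs : |∑ j ∈ Finset.range kk, c j * s ^ j| ≤ B * s ^ (kk - 1) := by
    calc |∑ j ∈ Finset.range kk, c j * s ^ j|
        ≤ ∑ j ∈ Finset.range kk, |c j * s ^ j| := Finset.abs_sum_le_sum_abs _ _
      _ ≤ ∑ j ∈ Finset.range kk, |c j| * s ^ (kk - 1) := by
          apply Finset.sum_le_sum
          intro j hj
          rw [abs_mul, _root_.abs_pow, abs_of_pos hspos]
          exact mul_le_mul_of_nonneg_left
            (pow_le_pow_right₀ hs1 (Nat.le_sub_one_of_lt (Finset.mem_range.mp hj))) (abs_nonneg _)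
      _ = B * s ^ (kk - 1) := by rw [← Finset.sum_mul]
  have hck2 : (c kk + B) * s ^ (kk - 1) ≤ c kk * s ^ kk := by
    have h1 : c kk + B ≤ c kk * s := by
      have h2 : c kk * (1 + B / c kk) ≤ c kk * s := mul_le_mul_of_nonneg_left hs (le_of_lt hck)
      have h3 : c kk * (1 + B / c kk) = c kk + B := by field_simp
      linarith
    have h4 : s ^ kk = s * s ^ (kk - 1) := by
      conv_lhs => rw [show kk = (kk - 1) + 1 by omega]
      rw [pow_succ]; ring
    rw [h4]
    calc (c kk + B) * s ^ (kk - 1) ≤ (c kk * s) * s ^ (kk - 1) :=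
          mul_le_mul_of_nonneg_right h1 (le_of_lt hspow)
      _ = c kk * (s * s ^ (kk - 1)) := by ring
  rw [Finset.sum_range_succ]
  have hlow2 : -(B * s ^ (kk - 1)) ≤ ∑ j ∈ Finset.range kk, c j * s ^ j := by
    have := neg_le_of_abs_le habs
    linarith [this]
  nlinarith [hck2, hlow2, mul_pos hck hspow]

/-! ### The cones `Gam a` -/

def Gam (N k : ℕ) (a : Fin N → ℝ) : Set (Fin N → ℝ) :=
  {x | ∀ s : ℝ, 0 ≤ s → 0 < vsigma N k (fun i => x i + s * a i)}

def Hyp (N k : ℕ) (μ : Fin N → ℝ) : Prop :=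
  ∀ (y : Fin N → ℝ) (z : ℂ), z.im ≠ 0 →
    esym N k (fun i => (y i : ℂ) + (μ i : ℂ) * z) ≠ 0

def Astat (N k : ℕ) (μ : Fin N → ℝ) : Prop :=
  ∀ (y : Fin N → ℝ) (lam : ℝ), 0 < lam → ∀ t : ℂ, 0 ≤ t.im →
    esym N k (fun i => ((y i : ℂ) + Complex.I * lam) + (μ i : ℂ) * t) ≠ 0

variable {N k : ℕ}

theorem vsigma_congr (x y : Fin N → ℝ) (h : ∀ i, x i = y i) : vsigma N k x = vsigma N k y := by
  congr 1; funext i; exact h i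

theorem gam_shift {a x : Fin N → ℝ} (hx : x ∈ Gam N k a) {c : ℝ} (hc : 0 ≤ c) :
    (fun i => x i + c * a i) ∈ Gam N k a := by
  intro s hs
  have h := hx (c + s) (by linarith)
  refine lt_of_lt_of_eq h (vsigma_congr _ _ (fun i => by ring))

theorem gam_cone {a x : Fin N → ℝ} (hx : x ∈ Gam N k a) {c : ℝ} (hc : 0 < c) :
    (fun i => c * x i) ∈ Gam N k a := by
  intro s hs
  have h := hx (s / c) (div_nonneg hs (le_of_lt hc))
  have heq : vsigma N k (fun i => c * x i + s * a i)
      = c ^ k * vsigma N k (fun i => x i + s / c * a i) := by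
    rw [vsigma_eq_esym, vsigma_eq_esym, ← esym_smul]
    refine congrArg _ (funext fun i => ?_)
    field_simp
  rw [heq]
  exact mul_pos (pow_pos hc _) h

theorem gam_self {a : Fin N → ℝ} (ha : 0 < vsigma N k a) : a ∈ Gam N k a := by
  intro s hs
  have heq : vsigma N k (fun i => a i + s * a i) = (1 + s) ^ k * vsigma N k a := by
    rw [vsigma_eq_esym, vsigma_eq_esym, ← esym_smul]
    refine congrArg _ (funext fun i => ?_)
    ring
  rw [heq]
  exact mul_pos (pow_pos (by linarith) _) ha

theorem gam_pos {a x : Fin N → ℝ} (hx : x ∈ Gam N k a) : 0 < vsigma N k x := by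
  have h := hx 0 le_rfl
  refine lt_of_lt_of_eq h (vsigma_congr _ _ (fun i => by ring))

theorem gam_subset_pos {a : Fin N → ℝ} :
    Gam N k a ⊆ {x : Fin N → ℝ | 0 < vsigma N k x} := fun _ hx => gam_pos hx

theorem gam_segment {a x : Fin N → ℝ} (hx : x ∈ Gam N k a) (ha : 0 < vsigma N k a) :
    segment ℝ x a ⊆ Gam N k a := by
  rintro z ⟨u, v, hu, hv, huv, rfl⟩
  rcases eq_or_lt_of_le hu with hu0 | hupos
  · -- u = 0, so z = v • a = a
    have hv1 : v = 1 := by linarith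
    intro s hs
    have heq : vsigma N k (fun i => (u • x + v • a) i + s * a i)
        = (1 + s) ^ k * vsigma N k a := by
      rw [vsigma_eq_esym, vsigma_eq_esym, ← esym_smul]
      refine congrArg _ (funext fun i => ?_)
      simp [Pi.add_apply, Pi.smul_apply, ← hu0, hv1]
      ring
    rw [heq]
    exact mul_pos (pow_pos (by linarith) _) ha
  · have hux : (fun i => u * x i) ∈ Gam N k a := gam_cone hx hupos
    intro s hs
    have h := hux (v + s) (by linarith)
    refine lt_of_lt_of_eq h (vsigma_congr _ _ (fun i => by
      simp [Pi.add_apply, Pi.smul_apply]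
      ring))

theorem gam_preconnected {a : Fin N → ℝ} (ha : 0 < vsigma N k a) :
    IsPreconnected (Gam N k a) := by
  have hU : Gam N k a = ⋃₀ {t : Set (Fin N → ℝ) | ∃ x ∈ Gam N k a, t = segment ℝ x a} := by
    apply Set.Subset.antisymm
    · intro x hx
      exact ⟨segment ℝ x a, ⟨x, hx, rfl⟩, left_mem_segment ℝ x a⟩
    · intro z hz
      obtain ⟨t, ⟨x, hx, rfl⟩, hzt⟩ := hz
      exact gam_segment hx ha hzt
  rw [hU]
  apply isPreconnected_sUnion a
  · rintro t ⟨x, hx, rfl⟩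
    exact right_mem_segment ℝ x a
  · rintro t ⟨x, hx, rfl⟩
    exact (convex_segment x a).isPreconnected

/-! ### interface lemmas -/

theorem esym_real_val (x μ : Fin N → ℝ) (s : ℝ) :
    esym N k (fun i => (x i : ℂ) + (μ i : ℂ) * (s : ℂ))
      = ((vsigma N k (fun i => x i + s * μ i) : ℝ) : ℂ) := by
  rw [esym_ofReal]
  refine congrArg _ (funext fun i => ?_)
  push_cast
  ring

theorem continuous_vsigma : Continuous (vsigma N k) := by
  have : vsigma N k = fun x => esym N k x := rfl
  rw [this]
  exact continuous_esym

theorem QP_deg_facts (a : Fin N → ℂ) (μ : Fin N → ℝ) (hμ : vsigma N k μ ≠ 0) :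
    (QP N k a (fun i => (μ i : ℂ))).natDegree = k ∧ (QP N k a (fun i => (μ i : ℂ))) ≠ 0 ∧
    (QP N k a (fun i => (μ i : ℂ))).leadingCoeff = ((vsigma N k μ : ℝ) : ℂ) := by
  have hck : (QP N k a (fun i => (μ i : ℂ))).coeff k = ((vsigma N k μ : ℝ) : ℂ) := by
    rw [QP_coeff_k, ← esym_ofReal]
  have hckne : (QP N k a (fun i => (μ i : ℂ))).coeff k ≠ 0 := by
    rw [hck]
    exact_mod_cast hμ
  have hdeg : (QP N k a (fun i => (μ i : ℂ))).natDegree = k :=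
    le_antisymm (QP_natDegree_le a _) (Polynomial.le_natDegree_of_ne_zero hckne)
  refine ⟨hdeg, fun hcon => hckne (by rw [hcon]; simp), ?_⟩
  rw [Polynomial.leadingCoeff, hdeg, hck]

theorem lb_aux (μ : Fin N → ℝ) (hμ : 0 < vsigma N k μ) (a : Fin N → ℂ)
    (hnv : ∀ t : ℂ, 0 ≤ t.im → esym N k (fun i => a i + (μ i : ℂ) * t) ≠ 0) :
    ∀ t : ℂ, 0 ≤ t.im →
      vsigma N k μ * t.im ^ k ≤ Complex.abs (esym N k (fun i => a i + (μ i : ℂ) * t)) := by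
  intro t ht
  set P := QP N k a (fun i => (μ i : ℂ)) with hP
  have hev : ∀ w : ℂ, P.eval w = esym N k (fun i => a i + (μ i : ℂ) * w) := fun w => QP_eval a _ w
  obtain ⟨hdeg, hPne, hlc⟩ := QP_deg_facts a μ (ne_of_gt hμ)
  have hroots : ∀ w : ℂ, P.IsRoot w → w.im < 0 := by
    intro w hw
    by_contra hcon
    push_neg at hcon
    exact hnv w hcon (by rw [← hev]; exact hw)
  have hdist : ∀ w : ℂ, P.IsRoot w → t.im ≤ Complex.abs (t - w) := by
    intro w hw
    have h1 := hroots w hw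
    have h2 : t.im ≤ (t - w).im := by rw [Complex.sub_im]; linarith
    calc t.im ≤ (t - w).im := h2
      _ ≤ |(t - w).im| := le_abs_self _
      _ ≤ Complex.abs (t - w) := Complex.abs_im_le_norm _
  have hged := abs_eval_ge hPne ht hdist
  rw [hdeg, hlc, hev] at hged
  calc vsigma N k μ * t.im ^ k = Complex.abs ((vsigma N k μ : ℝ) : ℂ) * t.im ^ k := by
        rw [Complex.abs_ofReal, abs_of_pos hμ]
    _ ≤ Complex.abs (esym N k (fun i => a i + (μ i : ℂ) * t)) := hged

theorem posup (x a : Fin N → ℝ) (ha : 0 < vsigma N k a)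
    (hnv : ∀ s : ℝ, 0 ≤ s → vsigma N k (fun i => x i + s * a i) ≠ 0) :
    x ∈ Gam N k a := by
  set c : ℕ → ℝ := fun j => (QP N k x a).coeff j with hc
  have heval : ∀ s : ℝ, vsigma N k (fun i => x i + s * a i)
      = ∑ j ∈ Finset.range (k + 1), c j * s ^ j := by
    intro s
    have h1 : (QP N k x a).eval s = esym N k (fun i => x i + a i * s) := QP_eval x a s
    have h2 : vsigma N k (fun i => x i + s * a i) = (QP N k x a).eval s := by
      rw [h1, vsigma_eq_esym]
      exact congrArg _ (funext fun i => by ring)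
    rw [h2, Polynomial.eval_eq_sum_range' (Nat.lt_succ_of_le (QP_natDegree_le x a)) s]
  have hck : c k = vsigma N k a := QP_coeff_k x a
  have hckpos : 0 < c k := by rw [hck]; exact ha
  set s₀ : ℝ := 1 + (∑ j ∈ Finset.range k, |c j|) / c k with hs₀
  have hs₀pos : ∀ s : ℝ, s₀ ≤ s → 0 < vsigma N k (fun i => x i + s * a i) := by
    intro s hs
    rw [heval s]
    exact lpos c hckpos s (by rw [← hs₀]; exact hs)
  intro s hs
  rcases le_or_gt s₀ s with hcase | hcase
  · exact hs₀pos s hcase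
  rcases lt_trichotomy (vsigma N k (fun i => x i + s * a i)) 0 with hneg | hzero | hpos
  · exfalso
    have hcont : Continuous fun r : ℝ => vsigma N k (fun i => x i + r * a i) := by
      apply continuous_vsigma.comp
      exact continuous_pi (fun i => continuous_const.add (continuous_id.mul continuous_const))
    have hivt := intermediate_value_Icc (le_of_lt hcase) hcont.continuousOn
    have h0mem : (0:ℝ) ∈ Set.Icc (vsigma N k (fun i => x i + s * a i))
        (vsigma N k (fun i => x i + s₀ * a i)) := by
      constructor
      · linarith
      · linarith [hs₀pos s₀ le_rfl]
    obtain ⟨r, hrmem, hr⟩ := hivt h0mem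
    exact hnv r (le_trans hs hrmem.1) hr
  · exact absurd hzero (hnv s hs)
  · exact hpos

theorem gam_open {a : Fin N → ℝ} (ha : 0 < vsigma N k a) (hyp : Hyp N k a) :
    IsOpen (Gam N k a) := by
  rw [isOpen_iff_mem_nhds]
  intro x hx
  set cf : (Fin N → ℝ) → ℕ → ℂ := fun y j => (QP N k (fun i => (y i : ℂ)) (fun i => (a i : ℂ))).coeff j with hcf
  have hcfcont : ∀ j, j ≤ k → Continuous fun y => cf y j := by
    intro j _
    apply continuous_QP_coeff
    · exact continuous_pi (fun i => Complex.continuous_ofReal.comp (continuous_apply i))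
    · exact continuous_const
  set D : Set ℂ := {z | z.im = 0 ∧ 0 ≤ z.re} with hD
  have hDclosed : IsClosed D := by
    rw [hD, Set.setOf_and]
    exact (isClosed_eq Complex.continuous_im continuous_const).inter
      (isClosed_le continuous_const Complex.continuous_re)
  have hsum_eval : ∀ (y : Fin N → ℝ) (t : ℂ),
      (∑ j ∈ Finset.range (k + 1), cf y j * t ^ j)
        = esym N k (fun i => (y i : ℂ) + (a i : ℂ) * t) := by
    intro y t
    rw [← QP_eval (fun i => ((y i : ℝ) : ℂ)) (fun i => ((a i : ℝ) : ℂ)) t,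
      Polynomial.eval_eq_sum_range' (Nat.lt_succ_of_le (QP_natDegree_le _ _)) t]
  have h0 : cf x k ≠ 0 := by
    rw [hcf]
    simp only [QP_coeff_k]
    rw [← esym_ofReal]
    exact_mod_cast ne_of_gt ha
  have hnv : ∀ t ∈ D, (∑ j ∈ Finset.range (k + 1), cf x j * t ^ j) ≠ 0 := by
    intro t ht
    rw [hsum_eval]
    have htre : t = ((t.re : ℝ) : ℂ) := Complex.ext rfl (by simp [ht.1])
    rw [htre, esym_real_val]
    exact_mod_cast ne_of_gt (hx t.re ht.2)
  have hev := pert cf hcfcont hDclosed h0 hnv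
  refine Filter.mem_of_superset hev ?_
  intro y hy
  apply posup y a ha
  intro s hs
  have hsD : ((s : ℝ) : ℂ) ∈ D := by constructor <;> simp [hs]
  have := hy _ hsD
  rw [hsum_eval, esym_real_val] at this
  exact_mod_cast this

theorem gam_in_F {a : Fin N → ℝ} (ha : 0 < vsigma N k a) (hyp : Hyp N k a)
    {x : Fin N → ℝ} (hx : x ∈ Gam N k a) :
    ∀ s : ℝ, 0 ≤ s → vsigma N k a * s ^ k ≤ vsigma N k (fun i => x i + s * a i) := by
  intro s hs
  set P := QP N k (fun i => ((x i : ℝ) : ℂ)) (fun i => (a i : ℂ)) with hP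
  have hev : ∀ w : ℂ, P.eval w = esym N k (fun i => (x i : ℂ) + (a i : ℂ) * w) :=
    fun w => QP_eval _ _ w
  obtain ⟨hdeg, hPne, hlc⟩ := QP_deg_facts (fun i => ((x i : ℝ) : ℂ)) a (ne_of_gt ha)
  have hroots : ∀ w : ℂ, P.IsRoot w → w.im = 0 ∧ w.re < 0 := by
    intro w hw
    have hwe : esym N k (fun i => (x i : ℂ) + (a i : ℂ) * w) = 0 := by rw [← hev]; exact hw
    have him : w.im = 0 := by
      by_contra hcon
      exact hyp x w hcon hwe
    refine ⟨him, ?_⟩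
    by_contra hcon
    push_neg at hcon
    have htre : w = ((w.re : ℝ) : ℂ) := Complex.ext rfl (by simp [him])
    rw [htre, esym_real_val] at hwe
    exact ne_of_gt (hx w.re hcon) (by exact_mod_cast hwe)
  have hdist : ∀ w : ℂ, P.IsRoot w → s ≤ Complex.abs ((s : ℂ) - w) := by
    intro w hw
    obtain ⟨him, hre⟩ := hroots w hw
    have : (s : ℂ) - w = (((s - w.re : ℝ)) : ℂ) := by
      apply Complex.ext <;> simp [him]
    rw [this, Complex.abs_ofReal]
    rw [abs_of_pos (by linarith)]
    linarith
  have hged := abs_eval_ge hPne hs hdist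
  rw [hdeg, hlc, hev, esym_real_val] at hged
  rw [Complex.abs_ofReal, abs_of_pos ha, Complex.abs_ofReal, abs_of_pos (hx s hs)] at hged
  exact hged

theorem gam_eq_comp {a : Fin N → ℝ} (ha : 0 < vsigma N k a) (hyp : Hyp N k a) :
    Gam N k a = connectedComponentIn {x : Fin N → ℝ | 0 < vsigma N k x} a := by
  have hopen_pos : IsOpen {x : Fin N → ℝ | 0 < vsigma N k x} :=
    isOpen_lt continuous_const continuous_vsigma
  apply Set.Subset.antisymm
  · exact (gam_preconnected ha).subset_connectedComponentIn (gam_self ha) gam_subset_pos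
  · set Fa : Set (Fin N → ℝ) :=
      {x | ∀ s : ℝ, 0 ≤ s → vsigma N k a * s ^ k ≤ vsigma N k (fun i => x i + s * a i)} with hFa
    have hFaclosed : IsClosed Fa := by
      have : Fa = ⋂ s : ℝ, {x | 0 ≤ s → vsigma N k a * s ^ k ≤ vsigma N k (fun i => x i + s * a i)} := by
        ext x; simp [hFa, Set.mem_iInter]
      rw [this]
      refine isClosed_iInter (fun s => ?_)
      by_cases hs : 0 ≤ s
      · have : {x : Fin N → ℝ | 0 ≤ s → vsigma N k a * s ^ k ≤ vsigma N k (fun i => x i + s * a i)}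
            = {x | vsigma N k a * s ^ k ≤ vsigma N k (fun i => x i + s * a i)} := by
          ext x; simp [hs]
        rw [this]
        apply isClosed_le continuous_const
        apply continuous_vsigma.comp
        exact continuous_pi (fun i => (continuous_apply i).add continuous_const)
      · have : {x : Fin N → ℝ | 0 ≤ s → vsigma N k a * s ^ k ≤ vsigma N k (fun i => x i + s * a i)}
            = Set.univ := by
          ext x; simp [hs]
        rw [this]
        exact isClosed_univ
    have hFtoGam : ∀ x, 0 < vsigma N k x → x ∈ Fa → x ∈ Gam N k a := by
      intro x hxpos hxF s hs
      rcases eq_or_lt_of_le hs with h0 | hspos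
      · have : vsigma N k (fun i => x i + s * a i) = vsigma N k x :=
          vsigma_congr _ _ (fun i => by rw [← h0]; ring)
        rw [this]; exact hxpos
      · have h1 := hxF s hs
        have h2 : 0 < vsigma N k a * s ^ k := mul_pos ha (pow_pos hspos _)
        linarith
    have hsub : connectedComponentIn {x : Fin N → ℝ | 0 < vsigma N k x} a
        ⊆ Gam N k a ∪ ({x : Fin N → ℝ | 0 < vsigma N k x} ∩ Faᶜ) := by
      intro x hxcomp
      have hxpos : 0 < vsigma N k x := connectedComponentIn_subset {x : Fin N → ℝ | 0 < vsigma N k x} a hxcomp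
      by_cases hxF : x ∈ Fa
      · exact Or.inl (hFtoGam x hxpos hxF)
      · exact Or.inr ⟨hxpos, hxF⟩
    have hdisj : Disjoint (Gam N k a) ({x : Fin N → ℝ | 0 < vsigma N k x} ∩ Faᶜ) := by
      rw [Set.disjoint_left]
      intro x hxGam hxv
      exact hxv.2 (gam_in_F ha hyp hxGam)
    have hne : (connectedComponentIn {x : Fin N → ℝ | 0 < vsigma N k x} a ∩ Gam N k a).Nonempty :=
      ⟨a, mem_connectedComponentIn (gam_pos (gam_self ha)), gam_self ha⟩
    exact (isPreconnected_connectedComponentIn).subset_left_of_subset_union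
      (gam_open ha hyp) (hopen_pos.inter hFaclosed.isOpen_compl) hdisj hsub hne

/-! ### the heart: Gårding's hyperbolicity propagation -/

theorem vsigma_one_pos (hk1 : 1 ≤ k) (hkN : k ≤ N) :
    0 < vsigma N k (fun _ : Fin N => (1:ℝ)) := by
  rw [vsigma]
  have : ∀ s ∈ Finset.powersetCard k (Finset.univ : Finset (Fin N)),
      (∏ _i ∈ s, (1:ℝ)) = 1 := fun s _ => Finset.prod_const_one
  rw [Finset.sum_congr rfl this, Finset.sum_const, Finset.card_powersetCard]
  simp only [nsmul_eq_mul, mul_one]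
  have hpos : 0 < ((Finset.univ : Finset (Fin N)).card).choose k := by
    apply Nat.choose_pos
    simpa using hkN
  exact_mod_cast hpos

theorem hyp_one (hk1 : 1 ≤ k) (hkN : k ≤ N) : Hyp N k (fun _ : Fin N => (1:ℝ)) := by
  intro y z hz
  have heq : esym N k (fun i => (y i : ℂ) + (((1:ℝ) : ℂ)) * z)
      = esym N k (fun i => (y i : ℂ) + z) := by
    refine congrArg _ (funext fun i => ?_)
    push_cast
    ring
  rw [heq]
  exact F1 hk1 hkN y z hz

theorem astat_of_g (hk1 : 1 ≤ k) (hkN : k ≤ N) {μ : Fin N → ℝ} (hμ : 0 < vsigma N k μ)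
    (hg : ∀ s : ℂ, 0 ≤ s.im → esym N k (fun i => Complex.I + (μ i : ℂ) * s) ≠ 0) :
    Astat N k μ := by
  intro y
  set SS : Set ℝ := {lam | ∀ t : ℂ, 0 ≤ t.im →
    esym N k (fun i => ((y i : ℂ) + Complex.I * (lam : ℂ)) + (μ i : ℂ) * t) ≠ 0} with hSS
  set Fy : Set ℝ := {lam | ∀ t : ℂ, 0 ≤ t.im →
    vsigma N k μ * t.im ^ k ≤
      Complex.abs (esym N k (fun i => ((y i : ℂ) + Complex.I * (lam : ℂ)) + (μ i : ℂ) * t))} with hFy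
  set D : Set ℂ := {t | 0 ≤ t.im} with hD
  have hDclosed : IsClosed D := isClosed_le continuous_const Complex.continuous_im
  have hsum_eval : ∀ (a : Fin N → ℂ) (t : ℂ),
      (∑ j ∈ Finset.range (k + 1), (QP N k a (fun i => (μ i : ℂ))).coeff j * t ^ j)
        = esym N k (fun i => a i + (μ i : ℂ) * t) := by
    intro a t
    rw [← QP_eval a (fun i => ((μ i : ℝ) : ℂ)) t,
      Polynomial.eval_eq_sum_range' (Nat.lt_succ_of_le (QP_natDegree_le _ _)) t]
  have hcoeffk : ∀ a : Fin N → ℂ, (QP N k a (fun i => (μ i : ℂ))).coeff k ≠ 0 := by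
    intro a
    rw [QP_coeff_k, ← esym_ofReal]
    exact_mod_cast ne_of_gt hμ
  -- SS is open
  have hSSopen : IsOpen SS := by
    rw [isOpen_iff_mem_nhds]
    intro lam hlam
    set cf : ℝ → ℕ → ℂ := fun lam' j =>
      (QP N k (fun i => (y i : ℂ) + Complex.I * (lam' : ℂ)) (fun i => (μ i : ℂ))).coeff j with hcf
    have hcfcont : ∀ j, j ≤ k → Continuous fun lam' => cf lam' j := by
      intro j _
      apply continuous_QP_coeff
      · refine continuous_pi (fun i => continuous_const.add ?_)
        exact continuous_const.mul (Complex.continuous_ofReal.comp continuous_id)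
      · exact continuous_const
    have hev := pert cf hcfcont hDclosed (hcoeffk _) (by
      intro t ht
      rw [hcf]
      rw [hsum_eval]
      exact hlam t ht)
    refine Filter.mem_of_superset hev ?_
    intro lam' hlam' t ht
    have := hlam' t ht
    rw [hcf, hsum_eval] at this
    exact this
  -- SS ⊆ Fy
  have hSSF : SS ⊆ Fy := by
    intro lam hlam t ht
    exact lb_aux μ hμ _ (fun t' ht' => hlam t' ht') t ht
  -- (0,∞) ∩ Fy ⊆ SS
  have hFSS : Set.Ioi (0:ℝ) ∩ Fy ⊆ SS := by
    rintro lam ⟨hlampos, hlamF⟩ t ht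
    rcases eq_or_lt_of_le ht with ht0 | htpos
    · -- t real : use F1
      have htre : t = ((t.re : ℝ) : ℂ) := Complex.ext rfl (by simp [← ht0])
      obtain ⟨sr, rfl⟩ : ∃ sr : ℝ, t = ((sr : ℝ) : ℂ) := ⟨t.re, htre⟩
      have heq : esym N k (fun i => ((y i : ℂ) + Complex.I * (lam : ℂ)) + (μ i : ℂ) * ((sr:ℝ):ℂ))
          = esym N k (fun i => (((y i + sr * μ i : ℝ)) : ℂ) + Complex.I * (lam : ℂ)) := by
        refine congrArg _ (funext fun i => ?_)
        push_cast
        ring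
      rw [heq]
      exact F1 hk1 hkN (fun i => y i + sr * μ i) (Complex.I * (lam : ℂ))
        (by simp [ne_of_gt (show (0:ℝ) < lam from hlampos)])
    · have hb := hlamF t ht
      intro hcon
      rw [hcon] at hb
      simp only [map_zero] at hb
      nlinarith [pow_pos htpos k, hμ]
  -- SS is nonempty with a positive element
  have hne : ∃ lam : ℝ, 0 < lam ∧ lam ∈ SS := by
    set cf : ℝ → ℕ → ℂ := fun r j =>
      (QP N k (fun i => (((r * y i : ℝ)) : ℂ) + Complex.I) (fun i => (μ i : ℂ))).coeff j with hcf
    have hcfcont : ∀ j, j ≤ k → Continuous fun r => cf r j := by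
      intro j _
      apply continuous_QP_coeff
      · refine continuous_pi (fun i => Continuous.add ?_ continuous_const)
        exact Complex.continuous_ofReal.comp (continuous_id.mul continuous_const)
      · exact continuous_const
    have hnv0 : ∀ t ∈ D, (∑ j ∈ Finset.range (k + 1), cf 0 j * t ^ j) ≠ 0 := by
      intro t ht
      rw [hcf, hsum_eval]
      have heq : esym N k (fun i => ((((0:ℝ) * y i : ℝ)) : ℂ) + Complex.I + (μ i : ℂ) * t)
          = esym N k (fun i => Complex.I + (μ i : ℂ) * t) := by
        refine congrArg _ (funext fun i => ?_)
        push_cast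
        ring
      rw [heq]
      exact hg t ht
    have hev := pert cf hcfcont hDclosed (hcoeffk _) hnv0
    rw [Metric.eventually_nhds_iff] at hev
    obtain ⟨ε, hεpos, hε⟩ := hev
    obtain ⟨r, hrpos, hrε⟩ : ∃ r : ℝ, 0 < r ∧ dist r 0 < ε := by
      refine ⟨ε / 2, by positivity, ?_⟩
      rw [Real.dist_eq, sub_zero, abs_of_pos (by positivity)]
      linarith
    refine ⟨r⁻¹, inv_pos.mpr hrpos, ?_⟩
    intro t ht
    intro hcon
    have hscale : esym N k (fun i => (((r * y i : ℝ)) : ℂ) + Complex.I + (μ i : ℂ) * ((r : ℂ) * t))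
        = (r : ℂ) ^ k * esym N k (fun i => ((y i : ℂ) + Complex.I * ((r⁻¹ : ℝ) : ℂ)) + (μ i : ℂ) * t) := by
      have hrC : ((r : ℝ) : ℂ) ≠ 0 := by exact_mod_cast ne_of_gt hrpos
      rw [← esym_smul]
      refine congrArg _ (funext fun i => ?_)
      push_cast
      field_simp
    have ht' : ((r : ℂ) * t) ∈ D := by
      simp only [hD, Set.mem_setOf_eq]
      have : ((r : ℂ) * t).im = r * t.im := by
        simp [Complex.mul_im]
      rw [this]
      exact mul_nonneg (le_of_lt hrpos) ht
    have := hε hrε ((r:ℂ) * t) ht'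
    rw [hcf, hsum_eval] at this
    apply this
    rw [hscale, hcon, mul_zero]
  -- separation on (0, ∞)
  obtain ⟨lam₀, hlam₀pos, hlam₀⟩ := hne
  have hFyclosed : IsClosed Fy := by
    have : Fy = ⋂ t : ℂ, {lam : ℝ | 0 ≤ t.im →
        vsigma N k μ * t.im ^ k ≤
        Complex.abs (esym N k (fun i => ((y i : ℂ) + Complex.I * (lam : ℂ)) + (μ i : ℂ) * t))} := by
      ext lam; simp [hFy, Set.mem_iInter]
    rw [this]
    refine isClosed_iInter (fun t => ?_)
    by_cases ht : 0 ≤ t.im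
    · simp only [ht, true_implies]
      apply isClosed_le continuous_const
      apply Complex.continuous_abs.comp
      apply continuous_esym.comp
      refine continuous_pi (fun i => Continuous.add (continuous_const.add ?_) continuous_const)
      exact continuous_const.mul (Complex.continuous_ofReal.comp continuous_id)
    · simp only [ht, false_implies]
      simp only [Set.setOf_true]
      exact isClosed_univ
  have hcover : Set.Ioi (0:ℝ) ⊆ SS ∪ (Fyᶜ ∩ Set.Ioi 0) := by
    intro lam hlam
    by_cases hF : lam ∈ Fy
    · exact Or.inl (hFSS ⟨hlam, hF⟩)
    · exact Or.inr ⟨hF, hlam⟩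
  have hdisj : Disjoint SS (Fyᶜ ∩ Set.Ioi 0) := by
    rw [Set.disjoint_left]
    intro lam hlamSS hlamv
    exact hlamv.1 (hSSF hlamSS)
  have hIoi : Set.Ioi (0:ℝ) ⊆ SS := by
    apply (isPreconnected_Ioi).subset_left_of_subset_union hSSopen
      (hFyclosed.isOpen_compl.inter isOpen_Ioi) hdisj hcover
    exact ⟨lam₀, hlam₀pos, hlam₀⟩
  intro lam hlam t ht
  exact hIoi hlam t ht

theorem astat_all (hk1 : 1 ≤ k) (hkN : k ≤ N) :
    ∀ μ ∈ Gam N k (fun _ : Fin N => (1:ℝ)), Astat N k μ := by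
  have h1pos := vsigma_one_pos (N := N) hk1 hkN
  have h1hyp := hyp_one (N := N) hk1 hkN
  set G : Set (Fin N → ℝ) := {μ | ∀ t : ℂ, 0 ≤ t.im →
    esym N k (fun i => Complex.I + (μ i : ℂ) * t) ≠ 0} with hG
  set F : Set (Fin N → ℝ) := {μ | ∀ (y : Fin N → ℝ) (lam : ℝ) (t : ℂ), 0 < lam → 0 ≤ t.im →
    vsigma N k μ * t.im ^ k ≤
      Complex.abs (esym N k (fun i => ((y i : ℂ) + Complex.I * (lam : ℂ)) + (μ i : ℂ) * t))} with hF
  -- C1 : Astat of G-membership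
  have hC1 : ∀ μ ∈ Gam N k (fun _ : Fin N => (1:ℝ)), μ ∈ G → Astat N k μ := by
    intro μ hμGam hμG
    exact astat_of_g hk1 hkN (gam_pos hμGam) hμG
  -- C2 : Astat → F
  have hC2 : ∀ μ : Fin N → ℝ, 0 < vsigma N k μ → Astat N k μ → μ ∈ F := by
    intro μ hμpos hA y lam t hlam ht
    exact lb_aux μ hμpos _ (fun t' ht' => hA y lam hlam t' ht') t ht
  -- Astat from F for positive vsigma
  have hC3 : ∀ μ ∈ Gam N k (fun _ : Fin N => (1:ℝ)), μ ∈ F → Astat N k μ := by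
    intro μ hμGam hμF y lam hlam t ht
    rcases eq_or_lt_of_le ht with ht0 | htpos
    · have htre : t = ((t.re : ℝ) : ℂ) := Complex.ext rfl (by simp [← ht0])
      obtain ⟨sr, rfl⟩ : ∃ sr : ℝ, t = ((sr : ℝ) : ℂ) := ⟨t.re, htre⟩
      have heq : esym N k (fun i => ((y i : ℂ) + Complex.I * (lam : ℂ)) + (μ i : ℂ) * ((sr:ℝ):ℂ))
          = esym N k (fun i => (((y i + sr * μ i : ℝ)) : ℂ) + Complex.I * (lam : ℂ)) := by
        refine congrArg _ (funext fun i => ?_)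
        push_cast
        ring
      rw [heq]
      exact F1 hk1 hkN (fun i => y i + sr * μ i) (Complex.I * (lam : ℂ))
        (by simp [ne_of_gt hlam])
    · have hb := hμF y lam t hlam ht
      intro hcon
      rw [hcon] at hb
      simp only [map_zero] at hb
      nlinarith [pow_pos htpos k, gam_pos hμGam]
  -- Astat μ → μ ∈ G
  have hC4 : ∀ μ : Fin N → ℝ, Astat N k μ → μ ∈ G := by
    intro μ hA t ht
    have := hA (fun _ => 0) 1 one_pos t ht
    have heq : esym N k (fun i => (((0:ℝ) : ℂ) + Complex.I * ((1:ℝ) : ℂ)) + (μ i : ℂ) * t)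
        = esym N k (fun i => Complex.I + (μ i : ℂ) * t) := by
      refine congrArg _ (funext fun i => ?_)
      push_cast
      ring
    rw [heq] at this
    exact this
  -- G ∩ {vsigma > 0} is open
  have hGopen : IsOpen (G ∩ {μ : Fin N → ℝ | 0 < vsigma N k μ}) := by
    rw [isOpen_iff_mem_nhds]
    rintro μ ⟨hμ, hμpos⟩
    set cf : (Fin N → ℝ) → ℕ → ℂ := fun ν j =>
      (QP N k (fun _ => Complex.I) (fun i => (ν i : ℂ))).coeff j with hcf
    have hcfcont : ∀ j, j ≤ k → Continuous fun ν => cf ν j := by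
      intro j _
      apply continuous_QP_coeff
      · exact continuous_const
      · exact continuous_pi (fun i => Complex.continuous_ofReal.comp (continuous_apply i))
    have hDclosed : IsClosed {t : ℂ | 0 ≤ t.im} := isClosed_le continuous_const Complex.continuous_im
    have hsum_eval : ∀ (ν : Fin N → ℝ) (t : ℂ),
        (∑ j ∈ Finset.range (k + 1), cf ν j * t ^ j)
          = esym N k (fun i => Complex.I + (ν i : ℂ) * t) := by
      intro ν t
      rw [hcf, ← QP_eval (fun _ => Complex.I) (fun i => ((ν i : ℝ) : ℂ)) t,
        Polynomial.eval_eq_sum_range' (Nat.lt_succ_of_le (QP_natDegree_le _ _)) t]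
    have h0 : cf μ k ≠ 0 := by
      show (QP N k (fun _ => Complex.I) (fun i => ((μ i : ℝ) : ℂ))).coeff k ≠ 0
      rw [QP_coeff_k, ← esym_ofReal]
      exact_mod_cast ne_of_gt hμpos
    have hev := pert cf hcfcont hDclosed h0 (by
      intro t ht
      rw [hsum_eval]
      exact hμ t ht)
    have hevpos : {ν : Fin N → ℝ | 0 < vsigma N k ν} ∈ nhds μ :=
      (isOpen_lt continuous_const continuous_vsigma).mem_nhds hμpos
    refine Filter.mem_of_superset (Filter.inter_mem hev hevpos) ?_
    rintro ν ⟨hν, hνpos⟩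
    refine ⟨?_, hνpos⟩
    intro t ht
    have := hν t ht
    rw [hsum_eval] at this
    exact this
  -- separation on Gam e1
  have hGamOpen : IsOpen (Gam N k (fun _ : Fin N => (1:ℝ))) := gam_open h1pos h1hyp
  have hFclosed : IsClosed F := by
    have : F = ⋂ y : Fin N → ℝ, ⋂ lam : ℝ, ⋂ t : ℂ,
        {μ : Fin N → ℝ | 0 < lam → 0 ≤ t.im →
          vsigma N k μ * t.im ^ k ≤
          Complex.abs (esym N k (fun i => ((y i : ℂ) + Complex.I * (lam : ℂ)) + (μ i : ℂ) * t))} := by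
      ext μ
      constructor
      · intro h
        simp only [Set.mem_iInter]
        intro y lam t
        simp only [Set.mem_setOf_eq]
        intro hlam ht
        exact h y lam t hlam ht
      · intro h
        simp only [Set.mem_iInter, Set.mem_setOf_eq] at h
        intro y lam t hlam ht
        exact h y lam t hlam ht
    rw [this]
    refine isClosed_iInter (fun y => isClosed_iInter (fun lam => isClosed_iInter (fun t => ?_)))
    by_cases hc : 0 < lam ∧ 0 ≤ t.im
    · simp only [hc.1, hc.2, true_implies]
      apply isClosed_le
      · exact (continuous_vsigma.mul continuous_const)
      · apply Complex.continuous_abs.comp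
        apply continuous_esym.comp
        refine continuous_pi (fun i => Continuous.add continuous_const ?_)
        exact (Complex.continuous_ofReal.comp (continuous_apply i)).mul continuous_const
    · rcases not_and_or.mp hc with hc1 | hc2
      · have : {μ : Fin N → ℝ | 0 < lam → 0 ≤ t.im →
            vsigma N k μ * t.im ^ k ≤
            Complex.abs (esym N k (fun i => ((y i : ℂ) + Complex.I * (lam : ℂ)) + (μ i : ℂ) * t))}
            = Set.univ := by
          ext μ; simp [hc1]
        rw [this]; exact isClosed_univ
      · have : {μ : Fin N → ℝ | 0 < lam → 0 ≤ t.im →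
            vsigma N k μ * t.im ^ k ≤
            Complex.abs (esym N k (fun i => ((y i : ℂ) + Complex.I * (lam : ℂ)) + (μ i : ℂ) * t))}
            = Set.univ := by
          ext μ; simp [hc2]
        rw [this]; exact isClosed_univ
  have hcover : Gam N k (fun _ : Fin N => (1:ℝ))
      ⊆ ((G ∩ {μ : Fin N → ℝ | 0 < vsigma N k μ}) ∩ Gam N k (fun _ : Fin N => (1:ℝ)))
        ∪ (Fᶜ ∩ Gam N k (fun _ : Fin N => (1:ℝ))) := by
    intro μ hμ
    by_cases hF' : μ ∈ F
    · exact Or.inl ⟨⟨hC4 μ (hC3 μ hμ hF'), gam_pos hμ⟩, hμ⟩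
    · exact Or.inr ⟨hF', hμ⟩
  have hdisj : Disjoint ((G ∩ {μ : Fin N → ℝ | 0 < vsigma N k μ}) ∩ Gam N k (fun _ : Fin N => (1:ℝ)))
      (Fᶜ ∩ Gam N k (fun _ : Fin N => (1:ℝ))) := by
    rw [Set.disjoint_left]
    rintro μ ⟨⟨hμG, _⟩, hμGam⟩ ⟨hμF, _⟩
    exact hμF (hC2 μ (gam_pos hμGam) (hC1 μ hμGam hμG))
  have hone_mem : (fun _ : Fin N => (1:ℝ)) ∈ G := by
    intro t ht
    have heq : esym N k (fun i => Complex.I + (((1:ℝ)) : ℂ) * t)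
        = esym N k (fun i => (((0:ℝ)) : ℂ) + (t + Complex.I)) := by
      refine congrArg _ (funext fun i => ?_)
      push_cast
      ring
    rw [heq]
    apply F1 hk1 hkN (fun _ => 0) (t + Complex.I)
    simp only [Complex.add_im, Complex.I_im]
    linarith
  have hsub : Gam N k (fun _ : Fin N => (1:ℝ))
      ⊆ (G ∩ {μ : Fin N → ℝ | 0 < vsigma N k μ}) ∩ Gam N k (fun _ : Fin N => (1:ℝ)) := by
    apply (gam_preconnected h1pos).subset_left_of_subset_union
      (hGopen.inter hGamOpen) (hFclosed.isOpen_compl.inter hGamOpen) hdisj hcover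
    exact ⟨(fun _ => 1), gam_self h1pos, ⟨hone_mem, h1pos⟩, gam_self h1pos⟩
  intro μ hμ
  exact hC1 μ hμ (hsub hμ).1.1

theorem hyp_of_astat {μ : Fin N → ℝ} (hμ : 0 < vsigma N k μ) (hA : Astat N k μ) :
    Hyp N k μ := by
  have hpos : ∀ (y : Fin N → ℝ) (z : ℂ), 0 < z.im →
      esym N k (fun i => (y i : ℂ) + (μ i : ℂ) * z) ≠ 0 := by
    intro y z hz
    have hbound : ∀ lam : ℝ, 0 < lam →
        vsigma N k μ * z.im ^ k ≤
          Complex.abs (esym N k (fun i => ((y i : ℂ) + Complex.I * (lam : ℂ)) + (μ i : ℂ) * z)) := by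
      intro lam hlam
      exact lb_aux μ hμ _ (fun t ht => hA y lam hlam t ht) z (le_of_lt hz)
    have hcont : Continuous fun lam : ℝ =>
        Complex.abs (esym N k (fun i => ((y i : ℂ) + Complex.I * (lam : ℂ)) + (μ i : ℂ) * z)) := by
      apply Complex.continuous_abs.comp
      apply continuous_esym.comp
      refine continuous_pi (fun i => Continuous.add (continuous_const.add ?_) continuous_const)
      exact continuous_const.mul (Complex.continuous_ofReal.comp continuous_id)
    have htend : Filter.Tendsto (fun lam : ℝ =>
        Complex.abs (esym N k (fun i => ((y i : ℂ) + Complex.I * (lam : ℂ)) + (μ i : ℂ) * z)))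
        (nhdsWithin 0 (Set.Ioi 0))
        (nhds (Complex.abs (esym N k (fun i => ((y i : ℂ) + Complex.I * ((0:ℝ) : ℂ)) + (μ i : ℂ) * z)))) :=
      (hcont.tendsto 0).mono_left nhdsWithin_le_nhds
    have hge : vsigma N k μ * z.im ^ k ≤
        Complex.abs (esym N k (fun i => ((y i : ℂ) + Complex.I * ((0:ℝ) : ℂ)) + (μ i : ℂ) * z)) := by
      refine ge_of_tendsto htend ?_
      exact eventually_nhdsWithin_of_forall (fun lam hlam => hbound lam hlam)
    have heq : esym N k (fun i => ((y i : ℂ) + Complex.I * ((0:ℝ) : ℂ)) + (μ i : ℂ) * z)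
        = esym N k (fun i => (y i : ℂ) + (μ i : ℂ) * z) := by
      refine congrArg _ (funext fun i => ?_)
      push_cast
      ring
    rw [heq] at hge
    intro hcon
    rw [hcon] at hge
    simp only [map_zero] at hge
    nlinarith [pow_pos hz k, hμ]
  intro y z hz
  rcases lt_or_gt_of_ne hz with hneg | hposz
  · -- use conjugation
    have h1 : esym N k (fun i => (y i : ℂ) + (μ i : ℂ) * (starRingEnd ℂ z)) ≠ 0 := by
      apply hpos
      simp only [Complex.conj_im]
      linarith
    intro hcon
    apply h1
    have : esym N k (fun i => (y i : ℂ) + (μ i : ℂ) * (starRingEnd ℂ z))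
        = starRingEnd ℂ (esym N k (fun i => (y i : ℂ) + (μ i : ℂ) * z)) := by
      rw [← esym_conj]
      refine congrArg _ (funext fun i => ?_)
      simp [map_add, map_mul, Complex.conj_ofReal]
    rw [this, hcon, map_zero]
  · exact hpos y z hposz

end GammaAux

end GammaAux

theorem gammaPlus_convex {N : ℕ} (hN : 1 ≤ N) (k : ℕ) (hk1 : 1 ≤ k) (hkN : k ≤ N) :
    Convex ℝ (GammaPlus N k) := by
  have h1pos := GammaAux.vsigma_one_pos (N := N) (k := k) hk1 hkN
  have h1hyp := GammaAux.hyp_one (N := N) (k := k) hk1 hkN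
  have hGP : GammaPlus N k = GammaAux.Gam N k (fun _ => 1) := by
    rw [GammaPlus, GammaAux.gam_eq_comp h1pos h1hyp]
  rw [hGP]
  intro x hx y hy a b ha hb hab
  rcases eq_or_lt_of_le ha with ha0 | hapos
  · have hb1 : b = 1 := by linarith
    have hxy : a • x + b • y = y := by rw [← ha0, hb1]; simp
    rw [hxy]; exact hy
  rcases eq_or_lt_of_le hb with hb0 | hbpos
  · have ha1 : a = 1 := by linarith
    have hxy : a • x + b • y = x := by rw [← hb0, ha1]; simp
    rw [hxy]; exact hx
  have hax : (fun i => a * x i) ∈ GammaAux.Gam N k (fun _ => 1) := GammaAux.gam_cone hx hapos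
  have hby : (fun i => b * y i) ∈ GammaAux.Gam N k (fun _ => 1) := GammaAux.gam_cone hy hbpos
  have hbypos : 0 < vsigma N k (fun i => b * y i) := GammaAux.gam_pos hby
  have hbyhyp : GammaAux.Hyp N k (fun i => b * y i) :=
    GammaAux.hyp_of_astat hbypos (GammaAux.astat_all hk1 hkN _ hby)
  have hcomp1 : GammaAux.Gam N k (fun _ => 1)
      = connectedComponentIn {lam : Fin N → ℝ | 0 < vsigma N k lam} (fun _ => 1) :=
    GammaAux.gam_eq_comp h1pos h1hyp
  have hcomp2 : GammaAux.Gam N k (fun i => b * y i)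
      = connectedComponentIn {lam : Fin N → ℝ | 0 < vsigma N k lam} (fun i => b * y i) :=
    GammaAux.gam_eq_comp hbypos hbyhyp
  have hmem : (fun i => b * y i) ∈ connectedComponentIn
      {lam : Fin N → ℝ | 0 < vsigma N k lam} (fun _ => 1) := by
    rw [← hcomp1]; exact hby
  have hcompeq := connectedComponentIn_eq hmem
  have hGamEq : GammaAux.Gam N k (fun _ => 1) = GammaAux.Gam N k (fun i => b * y i) := by
    rw [hcomp1, hcomp2, hcompeq]
  have haxby : (fun i => a * x i) ∈ GammaAux.Gam N k (fun i => b * y i) := by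
    rw [← hGamEq]; exact hax
  have hsum := GammaAux.gam_shift haxby (by norm_num : (0:ℝ) ≤ 1)
  have hxy : a • x + b • y = (fun i => a * x i + 1 * (b * y i)) := by
    funext i
    simp [Pi.add_apply]
  rw [hxy, hGamEq]
  simpa using hsum
end

section
/- Let N ≥ 1 and 1 ≤ k ≤ N−1. Then Γ_{k+1}^+ ⊆ Γ_k^+. In particular there is a chain of inclusions {λ ∈ ℝ^N : λ_j > 0 for all j} = Γ_N^+ ⊆ Γ_{N−1}^+ ⊆ ⋯ ⊆ Γ_1^+. -/
/-!
The polynomial `∏ i, (X + λ_i) = ∑ t, σ_{N-t}(λ) X^t` splits over `ℝ`, hence so do all its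
derivatives (Rolle), and a nonconstant real-rooted `q` satisfies Laguerre's inequality
`q q'' < q'²` off its roots. At `0`, for the `(N - j - 2)`-th derivative, this reads:
if `σ_{j+1}(λ) = 0` and `σ_{j+2}(λ) ≠ 0` then `σ_j(λ) σ_{j+2}(λ) < 0`. By induction on `k`,
on `{σ_{k+1} > 0}` the conditions `σ_0, …, σ_k ≥ 0` and `σ_0, …, σ_k > 0` agree, so the latter
set is relatively clopen there. The connected set `Γ_{k+1}` meets it at `(1, …, 1)`, hence lies
in it, and in particular in the component `Γ_k` of `{σ_k > 0}`.
-/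

open Polynomial
open scoped Nat

namespace Polynomial

section Laguerre

variable {R : Type*} [CommRing R]

noncomputable def laguerre (p : R[X]) : R[X] :=
  derivative p ^ 2 - p * derivative (derivative p)

theorem laguerre_mul (p q : R[X]) :
    laguerre (p * q) = q ^ 2 * laguerre p + p ^ 2 * laguerre q := by
  simp only [laguerre, derivative_mul, derivative_add]
  ring

@[simp]
theorem laguerre_C (a : R) : laguerre (C a) = 0 := by
  simp [laguerre]

@[simp]
theorem laguerre_X_add_C (a : R) : laguerre (X + C a) = 1 := by
  simp [laguerre]

@[simp]
theorem laguerre_X_sub_C (a : R) : laguerre (X - C a) = 1 := by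
  simp [laguerre]

variable [LinearOrder R] [IsStrictOrderedRing R]

theorem Splits.eval_laguerre_nonneg {p : R[X]} (hp : p.Splits) (x : R) :
    0 ≤ (laguerre p).eval x := by
  induction hp using Submonoid.closure_induction with
  | mem p hp =>
    rcases hp with ⟨a, rfl⟩ | ⟨a, rfl⟩ <;> simp
  | one => simp [laguerre]
  | mul p q _ _ hp hq =>
    rw [laguerre_mul, eval_add, eval_mul, eval_mul, eval_pow, eval_pow]
    positivity

theorem Splits.eval_laguerre_pos {p : R[X]} (hp : p.Splits) (hdeg : 0 < p.natDegree) {x : R}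
    (hx : p.eval x ≠ 0) : 0 < (laguerre p).eval x := by
  obtain ⟨m, hm⟩ := splits_iff_exists_multiset.mp hp
  rcases m.empty_or_exists_mem with rfl | ⟨a, ha⟩
  · rw [hm] at hdeg
    simp at hdeg
  obtain ⟨m, rfl⟩ := Multiset.exists_cons_of_mem ha
  set g := C p.leadingCoeff * (m.map (X - C ·)).prod
  have hpg : p = (X - C a) * g := by
    rw [hm, Multiset.map_cons, Multiset.prod_cons]
    ring
  have hg : g.Splits := (Splits.multisetProd (by simp)).C_mul _
  have hgx : g.eval x ≠ 0 := fun h => hx (by rw [hpg, eval_mul, h, mul_zero])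
  rw [hpg, laguerre_mul, laguerre_X_sub_C, eval_add, eval_mul, eval_mul, eval_pow, eval_pow,
    eval_one, mul_one]
  have := hg.eval_laguerre_nonneg x
  positivity

end Laguerre

theorem Splits.derivative {p : ℝ[X]} (hp : p.Splits) : (derivative p).Splits := by
  rw [splits_iff_card_roots] at hp ⊢
  refine le_antisymm (card_roots' _) ?_
  have := card_roots_le_derivative p
  have := natDegree_derivative_le p
  omega

theorem Splits.iterate_derivative {p : ℝ[X]} (hp : p.Splits) (r : ℕ) :
    (Polynomial.derivative^[r] p).Splits := by
  induction r with
  | zero => exact hp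
  | succ r ih =>
    rw [Function.iterate_succ_apply']
    exact ih.derivative

theorem eval_zero_iterate_derivative {R : Type*} [CommSemiring R] (p : R[X]) (r : ℕ) :
    (derivative^[r] p).eval 0 = r ! * p.coeff r := by
  rw [← coeff_zero_eq_eval_zero, coeff_iterate_derivative, zero_add, Nat.descFactorial_self,
    nsmul_eq_mul]

end Polynomial

section ElementarySymmetric

variable {N : ℕ}

theorem vsigma_zero (lam : Fin N → ℝ) : vsigma N 0 lam = 1 := by
  simp [vsigma]

theorem vsigma_eq_zero_of_lt {k : ℕ} (hk : N < k) (lam : Fin N → ℝ) : vsigma N k lam = 0 := by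
  simp [vsigma, (Finset.powersetCard_eq_empty (s := (Finset.univ : Finset (Fin N)))).mpr
    (by simpa using hk)]

theorem vsigma_nonneg {k : ℕ} {lam : Fin N → ℝ} (h : ∀ i, 0 ≤ lam i) : 0 ≤ vsigma N k lam :=
  Finset.sum_nonneg fun _ _ => Finset.prod_nonneg fun i _ => h i

theorem continuous_vsigma (k : ℕ) : Continuous (vsigma N k) :=
  continuous_finsetSum _ fun _ _ => continuous_finsetProd _ fun i _ => continuous_apply i

theorem coeff_prod_X_add_C_eq_vsigma (lam : Fin N → ℝ) {t : ℕ} (ht : t ≤ N) :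
    (∏ i, (X + C (lam i))).coeff t = vsigma N (N - t) lam := by
  rw [Finset.prod_X_add_C_coeff _ _ (by simpa using ht)]
  simp [vsigma]

theorem eval_zero_iterate_derivative_prod_X_add_C (lam : Fin N → ℝ) {r j : ℕ} (h : r + j = N) :
    (derivative^[r] (∏ i, (X + C (lam i)))).eval 0 = r ! * vsigma N j lam := by
  rw [eval_zero_iterate_derivative, coeff_prod_X_add_C_eq_vsigma lam (by omega)]
  congr 2
  omega

theorem vsigma_mul_vsigma_add_two_neg {j : ℕ} {lam : Fin N → ℝ}
    (hj : vsigma N (j + 1) lam = 0) (hj2 : vsigma N (j + 2) lam ≠ 0) :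
    vsigma N j lam * vsigma N (j + 2) lam < 0 := by
  obtain ⟨m, rfl⟩ : ∃ m, N = m + (j + 2) :=
    ⟨N - (j + 2), by
      by_contra h
      exact hj2 (vsigma_eq_zero_of_lt (by omega) lam)⟩
  set p : ℝ[X] := ∏ i, (X + C (lam i))
  set q := derivative^[m] p
  have hq : q.Splits := Splits.iterate_derivative (Splits.prod fun i _ => Splits.X_add_C (lam i)) m
  have hdeg : 0 < q.natDegree := by
    refine lt_of_lt_of_le (by omega) (le_natDegree_of_ne_zero (n := j + 2) ?_)
    rw [coeff_iterate_derivative, coeff_prod_X_add_C_eq_vsigma lam (by omega),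
      show m + (j + 2) - (j + 2 + m) = 0 by omega, vsigma_zero, nsmul_eq_mul, mul_one,
      Nat.cast_ne_zero, Ne, Nat.descFactorial_eq_zero_iff_lt]
    omega
  have hq' : derivative q = derivative^[m + 1] p := (Function.iterate_succ_apply' _ _ _).symm
  have hq'' : derivative (derivative q) = derivative^[m + 2] p := by
    rw [hq']
    exact (Function.iterate_succ_apply' _ _ _).symm
  have h0 : q.eval 0 = m ! * vsigma _ (j + 2) lam :=
    eval_zero_iterate_derivative_prod_X_add_C lam rfl
  have hlag := hq.eval_laguerre_pos hdeg (x := 0) (by rw [h0]; positivity)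
  rw [laguerre, eval_sub, eval_pow, eval_mul, h0, hq'', hq',
    eval_zero_iterate_derivative_prod_X_add_C lam (j := j + 1) (by omega), hj,
    eval_zero_iterate_derivative_prod_X_add_C lam (j := j) (by omega)] at hlag
  have hfact : (0 : ℝ) < m ! * (m + 2) ! := by positivity
  nlinarith

theorem vsigma_pos_of_nonneg {k : ℕ} {lam : Fin N → ℝ} (hk : 0 < vsigma N (k + 1) lam)
    (hnonneg : ∀ j ≤ k, 0 ≤ vsigma N j lam) : ∀ j ≤ k, 0 < vsigma N j lam := by
  induction k with
  | zero =>
    intro j hj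
    rw [Nat.le_zero.mp hj, vsigma_zero]
    exact one_pos
  | succ k ih =>
    have hk1 : 0 < vsigma N (k + 1) lam := by
      refine (hnonneg (k + 1) le_rfl).lt_of_ne' fun hzero => ?_
      have := vsigma_mul_vsigma_add_two_neg hzero hk.ne'
      have := hnonneg k (by omega)
      nlinarith
    intro j hj
    rcases hj.lt_or_eq with hj | rfl
    · exact ih hk1 (fun i hi => hnonneg i (by omega)) j (by omega)
    · exact hk1

end ElementarySymmetric

section GammaPlus

variable {N : ℕ}

theorem isPreconnected_gammaPlus (k : ℕ) : IsPreconnected (GammaPlus N k) :=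
  isPreconnected_connectedComponentIn

theorem gammaPlus_subset (k : ℕ) : GammaPlus N k ⊆ {lam | 0 < vsigma N k lam} :=
  connectedComponentIn_subset _ _

theorem one_mem_gammaPlus {k : ℕ} (h : (GammaPlus N k).Nonempty) :
    (fun _ => 1) ∈ GammaPlus N k :=
  mem_connectedComponentIn (connectedComponentIn_nonempty_iff.mp h)

theorem gammaPlus_succ_subset (k : ℕ) :
    GammaPlus N (k + 1) ⊆ {lam | ∀ j ≤ k, 0 < vsigma N j lam} := by
  intro x hx
  set pos := {lam : Fin N → ℝ | ∀ j ≤ k, 0 < vsigma N j lam}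
  set nonneg := {lam : Fin N → ℝ | ∀ j ≤ k, 0 ≤ vsigma N j lam}
  have hpos : IsOpen pos := by
    simp only [pos, Set.ofPred_forall]
    exact (Set.finite_Iic k).isOpen_biInter fun j _ =>
      isOpen_lt continuous_const (continuous_vsigma j)
  have hnonneg : IsClosed nonneg := by
    simp only [nonneg, Set.ofPred_forall]
    exact isClosed_iInter fun j => isClosed_iInter fun _ =>
      isClosed_le continuous_const (continuous_vsigma j)
  have hdisj : Disjoint pos nonnegᶜ :=
    Set.disjoint_compl_right_iff_subset.mpr fun _ h j hj => (h j hj).le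
  have hcover : GammaPlus N (k + 1) ⊆ pos ∪ nonnegᶜ := fun y hy =>
    (em (y ∈ nonneg)).imp (vsigma_pos_of_nonneg (gammaPlus_subset _ hy)) id
  have hone := one_mem_gammaPlus ⟨x, hx⟩
  have hone_pos : (fun _ => (1 : ℝ)) ∈ pos :=
    vsigma_pos_of_nonneg (gammaPlus_subset _ hone) fun _ _ => vsigma_nonneg fun _ => zero_le_one
  exact (isPreconnected_gammaPlus _).subset_left_of_subset_union hpos hnonneg.isOpen_compl hdisj
    hcover ⟨_, hone, hone_pos⟩ hx

end GammaPlus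

theorem gammaPlus_nested_general {N : ℕ} (k : ℕ) :
    GammaPlus N (k + 1) ⊆ GammaPlus N k := by
  intro x hx
  refine (isPreconnected_gammaPlus _).subset_connectedComponentIn (one_mem_gammaPlus ⟨x, hx⟩)
    (fun y hy => ?_) hx
  exact gammaPlus_succ_subset k hy k le_rfl

theorem gammaPlus_nested {N : ℕ} (hN : 1 ≤ N) (k : ℕ) (hk1 : 1 ≤ k) (hkN : k ≤ N - 1) :
    GammaPlus N (k + 1) ⊆ GammaPlus N k :=
  gammaPlus_nested_general k
end
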